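/- arXiv:1802.03487 — 9 statements merged into one kernel-verified Lean document; each statement's English description precedes it below -/
import Mathlib

section
/- For every integer n ≥ 2 and all real numbers a, b: a^n + b^n - 2((a+b)/2)^n = (a-b)^2 · p_n(a,b), where p_n(a,b) = Σ_{k=0}^{n-2} [k+1 - 2^{-n+1} Σ_{l=0}^{k} (k+1-l)·C(n,l)] a^{n-k-2} b^k. In particular, for n = 2, p_2(a,b) = 1/2. -/
open Finset

/-- The polynomial `p_n(a,b)` from Lemma A.2 of the paper. -/
noncomputable def pPoly (n : ℕ) (a b : ℝ) : ℝ :=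
  ∑ k ∈ Finset.range (n - 1),
    (((k : ℝ) + 1) - (2 : ℝ) ^ (1 - (n : ℤ)) *
      ∑ l ∈ Finset.range (k + 1), ((k : ℝ) + 1 - (l : ℝ)) * (n.choose l)) *
    a ^ (n - k - 2) * b ^ k


lemma tele (f x : ℕ → ℝ) (m : ℕ) :
    ∑ k ∈ range m, (∑ l ∈ range (k+1), f l) * (x k - x (k+1))
      = ∑ l ∈ range m, f l * (x l - x m) := by
  induction m with
  | zero => simp
  | succ m ih =>
    rw [sum_range_succ, ih, sum_range_succ (fun l => f l * (x l - x (m+1))),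
      show ∑ l ∈ range m, f l * (x l - x (m+1))
        = ∑ l ∈ range m, (f l * (x l - x m) + f l * (x m - x (m+1))) from
        sum_congr rfl fun _ _ => by ring,
      sum_add_distrib, ← sum_mul, sum_range_succ f m]
    ring

lemma sumsum (g : ℕ → ℝ) (K : ℕ) :
    ∑ l ∈ range K, ∑ m ∈ range (l+1), g m = ∑ m ∈ range K, ((K:ℝ) - m) * g m := by
  induction K with
  | zero => simp
  | succ K ih =>
    rw [sum_range_succ, ih, sum_range_succ (fun m => ((((K+1 : ℕ)):ℝ) - m) * g m),
      show ∑ m ∈ range K, ((((K+1:ℕ)):ℝ) - m) * g m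
        = ∑ m ∈ range K, (((K:ℝ) - m) * g m + g m) from
        sum_congr rfl fun _ _ => by push_cast; ring,
      sum_add_distrib, sum_range_succ g K]
    push_cast
    ring

lemma sum_i_choose (m : ℕ) :
    ∑ i ∈ range (m+2), i * (m+1).choose i = (m+1) * 2^m := by
  rw [Finset.sum_range_succ']
  have h : ∀ i, (i+1) * (m+1).choose (i+1) = (m+1) * m.choose i := by
    intro i
    rw [mul_comm, Nat.add_one_mul_choose_eq, mul_comm]
  calc (∑ i ∈ range (m+1), (i+1) * (m+1).choose (i+1)) + 0 * (m+1).choose 0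
      = ∑ i ∈ range (m+1), (m+1) * m.choose i := by
        rw [Finset.sum_congr rfl fun i _ => h i]; ring
    _ = (m+1) * 2^m := by rw [← Finset.mul_sum, Nat.sum_range_choose]

noncomputable def Ee (n l : ℕ) : ℝ :=
  1 - 2 ^ (1 - (n:ℤ)) * ∑ j ∈ range (l+1), ((n.choose j : ℕ) : ℝ)

noncomputable def gg (n j : ℕ) : ℝ :=
  (if j = 0 then 1 else 0) - 2 ^ (1 - (n:ℤ)) * ((n.choose j : ℕ) : ℝ)

lemma Eg (n l : ℕ) : ∑ j ∈ range (l+1), gg n j = Ee n l := by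
  unfold gg Ee
  rw [sum_sub_distrib, ← mul_sum]
  congr 1
  rw [Finset.sum_ite_eq' (range (l+1)) 0 (fun _ => (1:ℝ))]
  simp

lemma coefE (n k : ℕ) :
    (((k : ℝ) + 1) - (2 : ℝ) ^ (1 - (n : ℤ)) *
      ∑ l ∈ range (k + 1), ((k : ℝ) + 1 - (l : ℝ)) * (n.choose l))
    = ∑ l ∈ range (k+1), Ee n l := by
  unfold Ee
  rw [sum_sub_distrib, ← mul_sum, sumsum (fun j => ((n.choose j : ℕ) : ℝ)) (k+1)]
  push_cast
  simp

lemma sumC (m : ℕ) :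
    ∑ j ∈ range (m+1), (((m+2).choose j : ℕ) : ℝ) = 2^(m+2) - (m+2) - 1 := by
  have h1 := congrArg (Nat.cast (R := ℝ)) (Nat.sum_range_choose (m+2))
  push_cast at h1
  rw [sum_range_succ, sum_range_succ] at h1
  have hc1 : (((m+2).choose (m+1) : ℕ) : ℝ) = (m:ℝ)+2 := by
    rw [Nat.choose_succ_self_right]; push_cast; ring
  rw [hc1, Nat.choose_self] at h1
  push_cast at h1
  linarith

lemma sumCmj (m : ℕ) :
    ∑ j ∈ range (m+1), (((m:ℝ)+1) - j) * ((m+2).choose j) = (m:ℝ) * 2^(m+1) + 1 := by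
  have h1 := congrArg (Nat.cast (R := ℝ)) (Nat.sum_range_choose (m+2))
  have h2 := congrArg (Nat.cast (R := ℝ)) (sum_i_choose (m+1))
  push_cast at h1 h2
  have h3 : ∑ j ∈ range (m+3), (((m:ℝ)+1) - j) * ((m+2).choose j)
      = ((m:ℝ)+1) * 2^(m+2) - ((m:ℝ)+2) * 2^(m+1) := by
    rw [show (∑ j ∈ range (m+3), (((m:ℝ)+1) - j) * ((m+2).choose j))
        = ∑ j ∈ range (m+3), (((m:ℝ)+1) * ((m+2).choose j) - j * ((m+2).choose j)) from
        sum_congr rfl fun _ _ => by ring,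
      sum_sub_distrib, ← mul_sum]
    rw [show m+3 = m+2+1 from rfl, h1, h2]
    ring
  rw [show m+3 = m+1+1+1 from rfl, sum_range_succ, sum_range_succ] at h3
  have hc1 : (((m+2).choose (m+1) : ℕ) : ℝ) = (m:ℝ)+2 := by
    rw [Nat.choose_succ_self_right]; push_cast; ring
  rw [hc1, Nat.choose_self] at h3
  push_cast at h3
  have hp : (2:ℝ)^(m+2) = 2 * 2^(m+1) := by ring
  linear_combination h3 + ((m:ℝ)+1) * hp

theorem stmt0 (n : ℕ) (hn : 2 ≤ n) (a b : ℝ) :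
    a ^ n + b ^ n - 2 * ((a + b) / 2) ^ n = (a - b) ^ 2 * pPoly n a b ∧
    pPoly 2 a b = 1 / 2 := by
  refine ⟨?_, by unfold pPoly; norm_num⟩
  obtain ⟨m, rfl⟩ : ∃ m, n = m + 2 := ⟨n - 2, by omega⟩
  clear hn
  set z : ℝ := 2 ^ (1 - ((m+2 : ℕ):ℤ)) with hzdef
  have hzP : z * 2^(m+1) = 1 := by
    have he : (1 - ((m+2:ℕ):ℤ)) + ((m+1:ℕ):ℤ) = 0 := by push_cast; ring
    rw [hzdef, ← zpow_natCast (2:ℝ) (m+1), ← zpow_add₀ (two_ne_zero), he, zpow_zero]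
  set X : ℕ → ℝ := fun j => a^(m+1-j) * b^j with hX
  set Y : ℕ → ℝ := fun j => a^(m+2-j) * b^j with hY
  have hS : ∑ l ∈ range (m+1), Ee (m+2) l = 1 - z := by
    unfold Ee
    rw [sum_sub_distrib, ← mul_sum, ← hzdef,
      sumsum (fun j => (((m+2).choose j : ℕ):ℝ)) (m+1)]
    push_cast
    rw [sumCmj]
    simp only [sum_const, card_range, nsmul_eq_mul, mul_one]
    push_cast
    linear_combination (-(m:ℝ)) * hzP
  have hElast : Ee (m+2) m = 1 - z * (2^(m+2) - (m+2) - 1) := by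
    unfold Ee
    rw [← hzdef, sumC]
  have hA : (a-b) * pPoly (m+2) a b
      = ∑ l ∈ range (m+1), Ee (m+2) l * X l - (1-z) * b^(m+1) := by
    unfold pPoly
    rw [show m+2-1 = m+1 from rfl]
    simp only [coefE]
    rw [mul_sum,
      sum_congr rfl (fun k hk => by
        have hk' : k ≤ m := by have := mem_range.mp hk; omega
        show (a-b) * ((∑ l ∈ range (k+1), Ee (m+2) l) * a ^ (m+2-k-2) * b^k)
          = (∑ l ∈ range (k+1), Ee (m+2) l) * (X k - X (k+1))
        have h1 : m+2-k-2 = m-k := by omega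
        have h2 : m+1-k = (m-k)+1 := by omega
        have h3 : m+1-(k+1) = m-k := by omega
        rw [hX]
        simp only
        rw [h1, h2, h3]
        ring),
      tele (Ee (m+2)) X (m+1),
      sum_congr rfl (fun l _ => mul_sub (Ee (m+2) l) (X l) (X (m+1))),
      sum_sub_distrib, ← sum_mul, hS]
    have : X (m+1) = b^(m+1) := by rw [hX]; simp
    rw [this]
  have hB : (a-b) * (∑ l ∈ range (m+1), Ee (m+2) l * X l)
      = a^(m+2) - z * (∑ j ∈ range (m+1), (((m+2).choose j : ℕ):ℝ) * Y j)
        - Ee (m+2) m * (a * b^(m+1)) := by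
    rw [mul_sum,
      sum_congr rfl (fun l hl => by
        have hl' : l ≤ m := by have := mem_range.mp hl; omega
        show (a-b) * (Ee (m+2) l * X l) = (∑ j ∈ range (l+1), gg (m+2) j) * (Y l - Y (l+1))
        rw [Eg, hX, hY]
        simp only
        have h2 : m+2-l = (m+1-l)+1 := by omega
        have h3 : m+2-(l+1) = m+1-l := by omega
        rw [h2, h3]
        ring),
      tele (gg (m+2)) Y (m+1),
      sum_congr rfl (fun j _ => mul_sub (gg (m+2) j) (Y j) (Y (m+1))),
      sum_sub_distrib, ← sum_mul, Eg]
    have hYm : Y (m+1) = a * b^(m+1) := by rw [hY]; simp only; rw [show m+2-(m+1) = 1 from by omega]; ring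
    have hgY : ∑ j ∈ range (m+1), gg (m+2) j * Y j
        = a^(m+2) - z * ∑ j ∈ range (m+1), (((m+2).choose j : ℕ):ℝ) * Y j := by
      unfold gg
      rw [← hzdef,
        sum_congr rfl (fun j _ => by
          show ((if j = 0 then (1:ℝ) else 0) - z * ((m+2).choose j)) * Y j
            = (if j = 0 then Y j else 0) - z * (((m+2).choose j) * Y j)
          by_cases h : j = 0 <;> simp [h] <;> ring),
        sum_sub_distrib, ← mul_sum,
        Finset.sum_ite_eq' (range (m+1)) 0 Y]
      simp only [mem_range, Nat.succ_pos, if_pos (Nat.succ_pos m)]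
      rw [hY]
      simp
    rw [hgY, hYm]
  have key : (a-b)^2 * pPoly (m+2) a b
      = (a^(m+2) - z * (∑ j ∈ range (m+1), (((m+2).choose j : ℕ):ℝ) * Y j)
          - (1 - z * (2^(m+2) - (m+2) - 1)) * (a * b^(m+1)))
        - (1-z) * ((a-b) * b^(m+1)) := by
    rw [show (a-b)^2 * pPoly (m+2) a b = (a-b) * ((a-b) * pPoly (m+2) a b) from by ring,
      hA, mul_sub, hB, hElast]
    ring
  have hzinv : z = ((2:ℝ)^(m+1))⁻¹ := eq_inv_of_mul_eq_one_left hzP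
  have hpow : 2*((a+b)/2)^(m+2)
      = z * ∑ k ∈ range (m+2+1), b^k * a^(m+2-k) * (((m+2).choose k : ℕ):ℝ) := by
    rw [show a+b = b+a from add_comm a b, div_pow, ← add_pow, hzinv,
      show (2:ℝ)^(m+2) = 2^(m+1)*2 from pow_succ 2 (m+1)]
    have : (2:ℝ)^(m+1) ≠ 0 := by positivity
    field_simp
  rw [hpow, show m+2+1 = m+1+1+1 from rfl, sum_range_succ, sum_range_succ,
    sum_congr rfl (fun k hk => by
      show b^k * a^(m+2-k) * (((m+2).choose k : ℕ):ℝ) = (((m+2).choose k : ℕ):ℝ) * Y k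
      rw [hY]; simp only; ring),
    key]
  have hc1 : (((m+2).choose (m+1) : ℕ) : ℝ) = (m:ℝ)+2 := by
    rw [Nat.choose_succ_self_right]; push_cast; ring
  have hc2 : (((m+2).choose (m+2) : ℕ) : ℝ) = 1 := by rw [Nat.choose_self]; norm_num
  rw [hc1, hc2, show m+2-(m+1) = 1 from by omega, show m+2-(m+2) = 0 from by omega]
  push_cast
  linear_combination (-2*a*b^(m+1)) * hzP
end

section
/- For all integers n₁, n₂ ≥ 1 and real numbers a, b, c, d: a^{n₁} c^{n₂} + b^{n₁} d^{n₂} - 2((a+b)/2)^{n₁} ((c+d)/2)^{n₂} can be written as (a-b)²·Q₁ + (c-d)²·Q₂ + (a-b)(c-d)·R for some polynomials Q₁, Q₂, R in a, b, c, d all of whose terms have degree exactly n₁+n₂-2; moreover when n₁ = n₂ = 1 one can take Q₁ = Q₂ = 0 and R = 1/2. -/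
open MvPolynomial

private lemma geomAux (n : ℕ) (i j : Fin 4) :
    ∃ A : MvPolynomial (Fin 4) ℝ, A.IsHomogeneous (n - 1) ∧
      X i ^ n - X j ^ n = (X i - X j) * A := by
  refine ⟨∑ k ∈ Finset.range n, X i ^ k * X j ^ (n - 1 - k), ?_, ?_⟩
  · apply IsHomogeneous.sum
    intro k hk
    have h : k + (n - 1 - k) = n - 1 := by
      have := Finset.mem_range.mp hk; omega
    have h2 := (isHomogeneous_X_pow (R := ℝ) i k).mul (isHomogeneous_X_pow (R := ℝ) j (n - 1 - k))
    rwa [h] at h2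
  · rw [← geom_sum₂_mul (X i) (X j) n, mul_comm]

private lemma Chalf {σ : Type*} : (C (1 / 2 : ℝ) : MvPolynomial σ ℝ) * 2 = 1 := by
  rw [show (2 : MvPolynomial σ ℝ) = C 2 from (map_ofNat C 2).symm, ← C_mul, ← C_1]
  norm_num

private lemma base11 {σ : Type*} (a b c d : σ) :
    (X a : MvPolynomial σ ℝ) ^ 1 * X c ^ 1 + X b ^ 1 * X d ^ 1
        - 2 * (C (1 / 2 : ℝ) * (X a + X b)) ^ 1 * (C (1 / 2 : ℝ) * (X c + X d)) ^ 1
      = (X a - X b) ^ 2 * 0 + (X c - X d) ^ 2 * 0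
        + (X a - X b) * (X c - X d) * C (1 / 2 : ℝ) := by
  linear_combination (-(C (1 / 2 : ℝ) * ((X a + X b) * (X c + X d)))
    - (X a * X c + X b * X d)) * (Chalf (σ := σ))

private lemma key : ∀ n₁ n₂ k : ℕ, 1 ≤ n₁ → 1 ≤ n₂ → n₁ + n₂ = k + 2 →
    ∃ Q₁ Q₂ R : MvPolynomial (Fin 4) ℝ,
      Q₁.IsHomogeneous k ∧ Q₂.IsHomogeneous k ∧ R.IsHomogeneous k ∧
      X 0 ^ n₁ * X 2 ^ n₂ + X 1 ^ n₁ * X 3 ^ n₂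
          - 2 * (C (1 / 2 : ℝ) * (X 0 + X 1)) ^ n₁ * (C (1 / 2 : ℝ) * (X 2 + X 3)) ^ n₂
        = (X 0 - X 1) ^ 2 * Q₁ + (X 2 - X 3) ^ 2 * Q₂ + (X 0 - X 1) * (X 2 - X 3) * R := by
  have hs : (C (1 / 2 : ℝ) * (X 0 + X 1) : MvPolynomial (Fin 4) ℝ).IsHomogeneous 1 :=
    ((isHomogeneous_X _ _).add (isHomogeneous_X _ _)).C_mul _
  have ht : (C (1 / 2 : ℝ) * (X 2 + X 3) : MvPolynomial (Fin 4) ℝ).IsHomogeneous 1 :=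
    ((isHomogeneous_X _ _).add (isHomogeneous_X _ _)).C_mul _
  intro n₁
  induction n₁ with
  | zero => intro n₂ k h1 _ _; exact absurd h1 (by norm_num)
  | succ m ih =>
    intro n₂ k h1 h2 hk
    rcases Nat.lt_or_ge m 1 with hm | hm
    · -- m = 0, so n₁ = 1 : induct on n₂
      interval_cases m
      clear ih h1 hm
      induction n₂ generalizing k with
      | zero => omega
      | succ p ihp =>
        rcases Nat.lt_or_ge p 1 with hp | hp
        · interval_cases p
          have hk0 : k = 0 := by omega
          subst hk0
          exact ⟨0, 0, C (1 / 2 : ℝ), isHomogeneous_zero _ _ _, isHomogeneous_zero _ _ _,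
            isHomogeneous_C _ _, base11 0 1 2 3⟩
        · obtain ⟨k', rfl⟩ : ∃ k', k = k' + 1 := ⟨k - 1, by omega⟩
          obtain ⟨Q₁, Q₂, R, hQ₁, hQ₂, hR, hE⟩ := ihp k' hp (by omega)
          obtain ⟨A, hA, hAeq⟩ := geomAux 1 0 1
          obtain ⟨B, hB, hBeq⟩ := geomAux p 2 3
          refine ⟨C (1 / 2 : ℝ) * (X 2 + X 3) * Q₁,
            C (1 / 2 : ℝ) * (X 2 + X 3) * Q₂ + C (1 / 2 : ℝ) * (B * X 1 ^ 1),
            C (1 / 2 : ℝ) * (X 2 + X 3) * R + C (1 / 2 : ℝ) * (A * X 2 ^ p), ?_, ?_, ?_, ?_⟩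
          · have := ht.mul hQ₁; rwa [add_comm 1 k'] at this
          · apply IsHomogeneous.add
            · have := ht.mul hQ₂; rwa [add_comm 1 k'] at this
            · have := (hB.mul (isHomogeneous_X_pow (R := ℝ) (1 : Fin 4) 1)).C_mul (1 / 2 : ℝ)
              rwa [show p - 1 + 1 = k' + 1 by omega] at this
          · apply IsHomogeneous.add
            · have := ht.mul hR; rwa [add_comm 1 k'] at this
            · have := (hA.mul (isHomogeneous_X_pow (R := ℝ) (2 : Fin 4) p)).C_mul (1 / 2 : ℝ)
              rwa [show 1 - 1 + p = k' + 1 by omega] at this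
          · linear_combination (C (1 / 2 : ℝ) * (X 2 + X 3)) * hE
              + C (1 / 2 : ℝ) * (X 2 - X 3) * X 1 ^ 1 * hBeq
              + C (1 / 2 : ℝ) * (X 2 - X 3) * X 2 ^ p * hAeq
              - (X 0 ^ 1 * X 2 * X 2 ^ p + X 1 ^ 1 * X 3 * X 3 ^ p) * Chalf
    · -- step in n₁ : from (m, n₂) to (m+1, n₂)
      obtain ⟨k', rfl⟩ : ∃ k', k = k' + 1 := ⟨k - 1, by omega⟩
      obtain ⟨Q₁, Q₂, R, hQ₁, hQ₂, hR, hE⟩ := ih n₂ k' hm h2 (by omega)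
      obtain ⟨A, hA, hAeq⟩ := geomAux m 0 1
      obtain ⟨B, hB, hBeq⟩ := geomAux n₂ 2 3
      refine ⟨C (1 / 2 : ℝ) * (X 0 + X 1) * Q₁ + C (1 / 2 : ℝ) * (A * X 2 ^ n₂),
        C (1 / 2 : ℝ) * (X 0 + X 1) * Q₂,
        C (1 / 2 : ℝ) * (X 0 + X 1) * R + C (1 / 2 : ℝ) * (X 1 ^ m * B), ?_, ?_, ?_, ?_⟩
      · apply IsHomogeneous.add
        · have := hs.mul hQ₁; rwa [add_comm 1 k'] at this
        · have := (hA.mul (isHomogeneous_X_pow (R := ℝ) (2 : Fin 4) n₂)).C_mul (1 / 2 : ℝ)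
          rwa [show m - 1 + n₂ = k' + 1 by omega] at this
      · have := hs.mul hQ₂; rwa [add_comm 1 k'] at this
      · apply IsHomogeneous.add
        · have := hs.mul hR; rwa [add_comm 1 k'] at this
        · have := ((isHomogeneous_X_pow (R := ℝ) (1 : Fin 4) m).mul hB).C_mul (1 / 2 : ℝ)
          rwa [show m + (n₂ - 1) = k' + 1 by omega] at this
      · linear_combination (C (1 / 2 : ℝ) * (X 0 + X 1)) * hE
          + C (1 / 2 : ℝ) * (X 0 - X 1) * X 2 ^ n₂ * hAeq
          + C (1 / 2 : ℝ) * (X 0 - X 1) * X 1 ^ m * hBeq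
          - (X 0 * X 0 ^ m * X 2 ^ n₂ + X 1 * X 1 ^ m * X 3 ^ n₂) * Chalf

/-- Lemma A.3 of the paper: a polynomial identity in four variables
`a = X 0`, `b = X 1`, `c = X 2`, `d = X 3`. -/
theorem stmt2 (n₁ n₂ : ℕ) (h1 : 1 ≤ n₁) (h2 : 1 ≤ n₂) :
    (∃ Q₁ Q₂ R : MvPolynomial (Fin 4) ℝ,
      Q₁.IsHomogeneous (n₁ + n₂ - 2) ∧ Q₂.IsHomogeneous (n₁ + n₂ - 2) ∧
      R.IsHomogeneous (n₁ + n₂ - 2) ∧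
      X 0 ^ n₁ * X 2 ^ n₂ + X 1 ^ n₁ * X 3 ^ n₂
          - 2 * (C (1 / 2 : ℝ) * (X 0 + X 1)) ^ n₁ * (C (1 / 2 : ℝ) * (X 2 + X 3)) ^ n₂
        = (X 0 - X 1) ^ 2 * Q₁ + (X 2 - X 3) ^ 2 * Q₂ + (X 0 - X 1) * (X 2 - X 3) * R) ∧
    (n₁ = 1 → n₂ = 1 →
      X 0 ^ n₁ * X 2 ^ n₂ + X 1 ^ n₁ * X 3 ^ n₂
          - 2 * (C (1 / 2 : ℝ) * (X 0 + X 1)) ^ n₁ * (C (1 / 2 : ℝ) * (X 2 + X 3)) ^ n₂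
        = (X 0 - X 1) ^ 2 * 0 + (X 2 - X 3) ^ 2 * 0
          + (X 0 - X 1) * (X 2 - X 3) * C (1 / 2 : ℝ)) := by
  constructor
  · exact key n₁ n₂ (n₁ + n₂ - 2) h1 h2 (by omega)
  · rintro rfl rfl
    exact base11 0 1 2 3
end

section
/- Let h(x) = max{s₊x, 0} + min{s₋x, 0} with s₊ > 0, s₋ ≥ 0. Let X ∈ ℝ^{d_x×m}, Y ∈ ℝ^{1×m}, Ȳ = W̄X̃ the linear least squares fit, η ≤ min{-1, 2 min_i ȳ_i}, and for any α > 0 define Ŵ₁ = α[W̄_{[d_x]}; 0], b̂₁ = α[W̄_{d_x+1} - η; -η𝟙], Ŵ₂ = [1/(αs₊), 0,...,0], b̂₂ = η. Then all hidden-node pre-activations Ŵ₁x_i + b̂₁ are entrywise positive, the network output equals Ȳ, and the empirical risk ℓ((Ŵ_j, b̂_j)) = (1/2)‖Ȳ - Y‖_F². -/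
open Finset Matrix

/-- `X` augmented with a row of ones. -/
noncomputable def augOnes {dx m : ℕ} (X : Matrix (Fin dx) (Fin m) ℝ) :
    Matrix (Fin (dx + 1)) (Fin m) ℝ :=
  Matrix.of fun i j => if h : (i : ℕ) < dx then X ⟨i, h⟩ j else 1

/-- Step 1 of Theorem 1: the constructed parameters have all hidden pre-activations
positive, realize the least-squares output, and attain the least-squares risk. -/
theorem stmt4 (dx d1 m : ℕ) (hd1 : 2 ≤ d1)
    (sp sm : ℝ) (hsp : 0 < sp) (hsm : 0 ≤ sm)
    (X : Matrix (Fin dx) (Fin m) ℝ) (Y : Matrix (Fin 1) (Fin m) ℝ)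
    (Wbar : Matrix (Fin 1) (Fin (dx + 1)) ℝ)
    (hmin : ∀ R : Matrix (Fin 1) (Fin (dx + 1)) ℝ,
      (1 / 2 : ℝ) * ∑ k, ((Wbar * augOnes X) 0 k - Y 0 k) ^ 2 ≤
        (1 / 2 : ℝ) * ∑ k, ((R * augOnes X) 0 k - Y 0 k) ^ 2)
    (α : ℝ) (hα : 0 < α) (η : ℝ)
    (hη1 : η ≤ -1) (hη2 : ∀ k : Fin m, η ≤ 2 * (Wbar * augOnes X) 0 k) :
    let act : ℝ → ℝ := fun x => max (sp * x) 0 + min (sm * x) 0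
    let W1 : Matrix (Fin d1) (Fin dx) ℝ :=
      Matrix.of fun i j => if (i : ℕ) = 0 then α * Wbar 0 j.castSucc else 0
    let b1 : Fin d1 → ℝ :=
      fun i => if (i : ℕ) = 0 then α * (Wbar 0 (Fin.last dx) - η) else -(α * η)
    let W2 : Matrix (Fin 1) (Fin d1) ℝ :=
      Matrix.of fun _ j => if (j : ℕ) = 0 then 1 / (α * sp) else 0
    (∀ (i : Fin d1) (k : Fin m), 0 < (W1 * X) i k + b1 i) ∧
    (∀ k : Fin m,
      (∑ j, W2 0 j * act ((W1 * X) j k + b1 j)) + η = (Wbar * augOnes X) 0 k) ∧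
    (1 / 2 : ℝ) * ∑ k, ((∑ j, W2 0 j * act ((W1 * X) j k + b1 j)) + η - Y 0 k) ^ 2 =
      (1 / 2 : ℝ) * ∑ k, ((Wbar * augOnes X) 0 k - Y 0 k) ^ 2 := by
  intro act W1 b1 W2
  have haug : ∀ k, (Wbar * augOnes X) 0 k
      = (∑ j : Fin dx, Wbar 0 j.castSucc * X j k) + Wbar 0 (Fin.last dx) := by
    intro k
    rw [Matrix.mul_apply, Fin.sum_univ_castSucc]
    congr 1
    · refine Finset.sum_congr rfl fun j _ => ?_
      have : ((j.castSucc : Fin (dx+1)) : ℕ) < dx := j.isLt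
      simp [augOnes, this]
    · simp [augOnes]
  have hpre : ∀ (i : Fin d1) (k : Fin m), (i : ℕ) = 0 →
      (W1 * X) i k + b1 i = α * ((Wbar * augOnes X) 0 k - η) := by
    intro i k hi
    have h1 : (W1 * X) i k = α * ∑ j : Fin dx, Wbar 0 j.castSucc * X j k := by
      rw [Matrix.mul_apply, Finset.mul_sum]
      refine Finset.sum_congr rfl fun j _ => ?_
      simp [W1, hi, mul_assoc]
    simp only [h1, b1, hi, haug, if_true, ite_true, eq_self_iff_true]
    ring
  have hpos : ∀ k : Fin m, 0 < (Wbar * augOnes X) 0 k - η := by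
    intro k
    rcases le_or_gt 0 ((Wbar * augOnes X) 0 k) with h | h
    · linarith
    · linarith [hη2 k]
  have hposα : ∀ (i : Fin d1) (k : Fin m), (i : ℕ) = 0 → 0 < (W1 * X) i k + b1 i := by
    intro i k hi
    rw [hpre i k hi]
    exact mul_pos hα (hpos k)
  have h0 : (0 : ℕ) < d1 := by omega
  have hact : ∀ k : Fin m,
      (∑ j, W2 0 j * act ((W1 * X) j k + b1 j)) + η = (Wbar * augOnes X) 0 k := by
    intro k
    have hsum : (∑ j, W2 0 j * act ((W1 * X) j k + b1 j))
        = W2 0 ⟨0, h0⟩ * act ((W1 * X) ⟨0, h0⟩ k + b1 ⟨0, h0⟩) := by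
      refine Finset.sum_eq_single _ (fun j _ hj => ?_) (fun h => absurd (Finset.mem_univ _) h)
      have : (j : ℕ) ≠ 0 := fun h => hj (Fin.ext h)
      simp [W2, this]
    rw [hsum]
    set x := (W1 * X) ⟨0, h0⟩ k + b1 ⟨0, h0⟩ with hx
    have hxpos : 0 < x := hposα ⟨0, h0⟩ k rfl
    have hactx : act x = sp * x := by
      have h1 : max (sp * x) 0 = sp * x := max_eq_left (le_of_lt (mul_pos hsp hxpos))
      have h2 : min (sm * x) 0 = 0 := min_eq_right (mul_nonneg hsm hxpos.le)
      simp [act, h1, h2]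
    rw [hactx]
    have hW2 : W2 0 ⟨0, h0⟩ = 1 / (α * sp) := by simp [W2]
    rw [hW2, hx, hpre ⟨0, h0⟩ k rfl]
    field_simp
    ring
  refine ⟨?_, hact, ?_⟩
  · intro i k
    by_cases hi : (i : ℕ) = 0
    · exact hposα i k hi
    · have h1 : (W1 * X) i k = 0 := by
        rw [Matrix.mul_apply]
        refine Finset.sum_eq_zero fun j _ => by simp [W1, hi]
      have h2 : b1 i = -(α * η) := by simp [b1, hi]
      rw [h1, h2]
      nlinarith
  · refine congrArg _ (Finset.sum_congr rfl fun k _ => ?_)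
    rw [hact k]
end

section
/- Under the setting of the previous statement, for sufficiently small perturbations (Δ₁, Δ₂, δ₁, δ₂) of (Ŵ₁, Ŵ₂, b̂₁, b̂₂), the empirical risk satisfies ℓ((Ŵ_j+Δ_j, b̂_j+δ_j)) = (1/2)‖Ȳ - Y‖² + (1/2)‖Δ̃X + δ̃𝟙ᵀ‖² ≥ ℓ((Ŵ_j, b̂_j)), where Δ̃ = s₊(Ŵ₂Δ₁ + Δ₂Ŵ₁ + Δ₂Δ₁) and δ̃ = s₊(Ŵ₂δ₁ + Δ₂b̂₁ + Δ₂δ₁) + δ₂. Hence (Ŵ_j, b̂_j)_{j=1}² is a local minimum of ℓ. -/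
open Finset Matrix

lemma quad_zero (b c : ℝ) (hc : 0 ≤ c) (h : ∀ t : ℝ, 0 ≤ t * b + t ^ 2 * c) : b = 0 := by
  have hc1 : (0:ℝ) < c + 1 := by linarith
  set t : ℝ := -b / (c + 1) with htdef
  have ht : t * (c + 1) = -b := by rw [htdef]; field_simp
  have h4 : t * (t * (c + 1)) = t * (-b) := by rw [ht]
  have hts : t ^ 2 ≤ 0 := by nlinarith [h t, h4]
  have ht0 : t = 0 := by
    have := sq_nonneg t
    have : t ^ 2 = 0 := le_antisymm hts (sq_nonneg t)
    exact pow_eq_zero_iff (by norm_num) |>.mp this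
  rw [ht0] at ht; linarith

lemma cross {dx m : ℕ} (X : Matrix (Fin dx) (Fin m) ℝ) (Y : Matrix (Fin 1) (Fin m) ℝ)
    (Wbar : Matrix (Fin 1) (Fin (dx + 1)) ℝ)
    (hmin : ∀ R : Matrix (Fin 1) (Fin (dx + 1)) ℝ,
      (1 / 2 : ℝ) * ∑ i, ∑ j, ((Wbar * augOnes X - Y) i j) ^ 2 ≤
        (1 / 2 : ℝ) * ∑ i, ∑ j, ((R * augOnes X - Y) i j) ^ 2)
    (c : Fin dx → ℝ) (d : ℝ) :
    ∑ k, ((Wbar * augOnes X) 0 k - Y 0 k) * ((∑ j, c j * X j k) + d) = 0 := by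
  set R : Matrix (Fin 1) (Fin (dx + 1)) ℝ :=
    Matrix.of (fun (_ : Fin 1) i => if h : (i : ℕ) < dx then c ⟨i, h⟩ else d) with hRdef
  have hR : ∀ k, (R * augOnes X) 0 k = (∑ j, c j * X j k) + d := by
    intro k
    simp only [Matrix.mul_apply, hRdef, augOnes, Matrix.of_apply, Fin.sum_univ_castSucc,
      Fin.coe_castSucc, Fin.is_lt, dite_true, Fin.val_last, lt_irrefl, dite_false,
      Fin.eta]
    ring
  -- apply hmin to Wbar + t • R
  have key : ∀ t : ℝ, 0 ≤ t * (2 * ∑ k, ((Wbar * augOnes X) 0 k - Y 0 k) * (R * augOnes X) 0 k)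
      + t ^ 2 * ∑ k, ((R * augOnes X) 0 k) ^ 2 := by
    intro t
    have h1 := hmin (Wbar + t • R)
    simp only [Fin.sum_univ_one, Matrix.sub_apply, Matrix.add_mul, Matrix.smul_mul,
      Matrix.add_apply, Matrix.smul_apply, smul_eq_mul] at h1
    have expand : ∑ k, ((Wbar * augOnes X) 0 k + t * (R * augOnes X) 0 k - Y 0 k) ^ 2
        = ∑ k, ((Wbar * augOnes X) 0 k - Y 0 k) ^ 2
          + (t * (2 * ∑ k, ((Wbar * augOnes X) 0 k - Y 0 k) * (R * augOnes X) 0 k)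
            + t ^ 2 * ∑ k, ((R * augOnes X) 0 k) ^ 2) := by
      rw [Finset.mul_sum, Finset.mul_sum, Finset.mul_sum, ← Finset.sum_add_distrib,
        ← Finset.sum_add_distrib]
      exact Finset.sum_congr rfl fun k _ => by ring
    rw [expand] at h1
    linarith
  have hcs : (0:ℝ) ≤ ∑ k, ((R * augOnes X) 0 k) ^ 2 :=
    Finset.sum_nonneg fun k _ => sq_nonneg _
  have := quad_zero _ _ hcs key
  have h2 : ∑ k, ((Wbar * augOnes X) 0 k - Y 0 k) * (R * augOnes X) 0 k = 0 := by linarith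
  rw [← h2]
  exact Finset.sum_congr rfl fun k _ => by rw [hR k]

/-- Step 1 of Theorem 1 (perturbation part): for all sufficiently small perturbations,
the risk decomposes as the least-squares risk plus a nonnegative term, hence the
constructed point is a local minimum. -/
theorem stmt5 (dx d1 m : ℕ) (hd1 : 2 ≤ d1)
    (sp sm : ℝ) (hsp : 0 < sp) (hsm : 0 ≤ sm)
    (X : Matrix (Fin dx) (Fin m) ℝ) (Y : Matrix (Fin 1) (Fin m) ℝ)
    (Wbar : Matrix (Fin 1) (Fin (dx + 1)) ℝ)
    (hmin : ∀ R : Matrix (Fin 1) (Fin (dx + 1)) ℝ,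
      (1 / 2 : ℝ) * ∑ i, ∑ j, ((Wbar * augOnes X - Y) i j) ^ 2 ≤
        (1 / 2 : ℝ) * ∑ i, ∑ j, ((R * augOnes X - Y) i j) ^ 2)
    (α : ℝ) (hα : 0 < α) (η : ℝ)
    (hη1 : η ≤ -1) (hη2 : ∀ k : Fin m, η ≤ 2 * (Wbar * augOnes X) 0 k) :
    let act : ℝ → ℝ := fun x => max (sp * x) 0 + min (sm * x) 0
    let W1 : Matrix (Fin d1) (Fin dx) ℝ :=
      Matrix.of fun i j => if (i : ℕ) = 0 then α * Wbar 0 j.castSucc else 0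
    let b1 : Fin d1 → ℝ :=
      fun i => if (i : ℕ) = 0 then α * (Wbar 0 (Fin.last dx) - η) else -(α * η)
    let W2 : Matrix (Fin 1) (Fin d1) ℝ :=
      Matrix.of fun _ j => if (j : ℕ) = 0 then 1 / (α * sp) else 0
    ∃ ε > (0 : ℝ),
      ∀ (Δ1 : Matrix (Fin d1) (Fin dx) ℝ) (Δ2 : Matrix (Fin 1) (Fin d1) ℝ)
        (δ1 : Fin d1 → ℝ) (δ2 : ℝ),
        (∀ i j, |Δ1 i j| ≤ ε) → (∀ j, |Δ2 0 j| ≤ ε) → (∀ j, |δ1 j| ≤ ε) → |δ2| ≤ ε →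
        let Δt : Fin dx → ℝ :=
          fun j => sp * ∑ i, (W2 0 i * Δ1 i j + Δ2 0 i * W1 i j + Δ2 0 i * Δ1 i j)
        let δt : ℝ :=
          sp * (∑ i, (W2 0 i * δ1 i + Δ2 0 i * b1 i + Δ2 0 i * δ1 i)) + δ2
        let riskPert : ℝ :=
          (1 / 2 : ℝ) * ∑ k,
            ((∑ j, (W2 0 j + Δ2 0 j) *
                act (((W1 + Δ1) * X) j k + (b1 j + δ1 j))) + (η + δ2) - Y 0 k) ^ 2
        riskPert =
            (1 / 2 : ℝ) * ∑ k, ((Wbar * augOnes X) 0 k - Y 0 k) ^ 2 +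
            (1 / 2 : ℝ) * ∑ k, ((∑ j, Δt j * X j k) + δt) ^ 2 ∧
        (1 / 2 : ℝ) * ∑ k, ((Wbar * augOnes X) 0 k - Y 0 k) ^ 2 ≤ riskPert := by
  intro act W1 b1 W2
  have haug : ∀ k, (Wbar * augOnes X) 0 k
      = (∑ i : Fin dx, Wbar 0 i.castSucc * X i k) + Wbar 0 (Fin.last dx) := by
    intro k
    simp only [Matrix.mul_apply, augOnes, Matrix.of_apply, Fin.sum_univ_castSucc,
      Fin.coe_castSucc, Fin.is_lt, dite_true, Fin.val_last, lt_irrefl, dite_false, Fin.eta]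
    ring
  set S : ℝ := ∑ i, ∑ k, |X i k| with hSdef
  have hS : 0 ≤ S := Finset.sum_nonneg fun _ _ => Finset.sum_nonneg fun _ _ => abs_nonneg _
  have hS1 : (0:ℝ) < S + 1 := by linarith
  refine ⟨α / (4 * (S + 1)), by positivity, ?_⟩
  intro Δ1 Δ2 δ1 δ2 hΔ1 hΔ2 hδ1 hδ2
  intro Δt δt riskPert
  set ε : ℝ := α / (4 * (S + 1)) with hεdef
  -- bound on perturbation of preactivations
  have hXk : ∀ k : Fin m, ∑ i, |X i k| ≤ S := by
    intro k
    refine Finset.sum_le_sum fun i _ => ?_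
    exact Finset.single_le_sum (f := fun k' => |X i k'|) (fun _ _ => abs_nonneg _)
      (Finset.mem_univ k)
  have hpertb : ∀ j k, |(Δ1 * X) j k + δ1 j| ≤ α / 4 := by
    intro j k
    have h1 : |(Δ1 * X) j k| ≤ ε * S := by
      rw [Matrix.mul_apply]
      calc |∑ i, Δ1 j i * X i k| ≤ ∑ i, |Δ1 j i * X i k| := Finset.abs_sum_le_sum_abs _ _
        _ ≤ ∑ i, ε * |X i k| := by
            refine Finset.sum_le_sum fun i _ => ?_
            rw [abs_mul]
            exact mul_le_mul_of_nonneg_right (hΔ1 j i) (abs_nonneg _)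
        _ = ε * ∑ i, |X i k| := by rw [Finset.mul_sum]
        _ ≤ ε * S := mul_le_mul_of_nonneg_left (hXk k) (by positivity)
    have h2 := hδ1 j
    have h3 : ε * (S + 1) = α / 4 := by
      rw [hεdef]; field_simp
    calc |(Δ1 * X) j k + δ1 j| ≤ |(Δ1 * X) j k| + |δ1 j| := abs_add_le _ _
      _ ≤ ε * S + ε := by linarith
      _ = ε * (S + 1) := by ring
      _ = α / 4 := h3
  -- the unperturbed preactivations are at least α/2
  have hbase : ∀ j k, α / 2 ≤ (W1 * X) j k + b1 j := by
    intro j k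
    by_cases hj : (j : ℕ) = 0
    · have hW1X : (W1 * X) j k = α * ∑ i : Fin dx, Wbar 0 i.castSucc * X i k := by
        rw [Matrix.mul_apply, Finset.mul_sum]
        exact Finset.sum_congr rfl fun i _ => by
          simp only [W1, Matrix.of_apply, hj, if_true]; ring
      have hb1 : b1 j = α * (Wbar 0 (Fin.last dx) - η) := by simp only [b1, hj, if_true]
      have hv := hη2 k
      rw [haug k] at hv
      rw [hW1X, hb1]
      have h5 : (1:ℝ)/2 ≤ (∑ i : Fin dx, Wbar 0 i.castSucc * X i k)
          + Wbar 0 (Fin.last dx) - η := by linarith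
      have h6 := mul_le_mul_of_nonneg_left h5 hα.le
      nlinarith [h6]
    · have hW1X : (W1 * X) j k = 0 := by
        rw [Matrix.mul_apply]
        refine Finset.sum_eq_zero fun i _ => ?_
        simp only [W1, Matrix.of_apply, hj, if_false, zero_mul]
      have hb1 : b1 j = -(α * η) := by simp only [b1, hj, if_false]
      rw [hW1X, hb1]
      nlinarith [hη1]
  -- positivity of perturbed preactivations
  have hpre : ∀ j k, 0 < ((W1 + Δ1) * X) j k + (b1 j + δ1 j) := by
    intro j k
    have h1 : ((W1 + Δ1) * X) j k = (W1 * X) j k + (Δ1 * X) j k := by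
      rw [Matrix.add_mul, Matrix.add_apply]
    rw [h1]
    have h2 := hbase j k
    have h3 := abs_le.mp (hpertb j k)
    have : α / 4 > 0 := by linarith
    linarith [h3.1]
  have hact : ∀ x : ℝ, 0 < x → act x = sp * x := by
    intro x hx
    simp only [act]
    rw [max_eq_left (by positivity), min_eq_right (by positivity), add_zero]
  -- per-j sum identity at each k
  have hd1' : 0 < d1 := by omega
  set i0 : Fin d1 := ⟨0, hd1'⟩ with hi0def
  have hi0 : (i0 : ℕ) = 0 := rfl
  have hW2sum : ∀ k, ∑ j : Fin d1, W2 0 j * (sp * ((W1 * X) j k + b1 j))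
      = (Wbar * augOnes X) 0 k - η := by
    intro k
    rw [Finset.sum_eq_single i0]
    · have hW1X : (W1 * X) i0 k = α * ∑ i : Fin dx, Wbar 0 i.castSucc * X i k := by
        rw [Matrix.mul_apply, Finset.mul_sum]
        exact Finset.sum_congr rfl fun i _ => by
          simp only [W1, Matrix.of_apply, hi0, if_true]; ring
      have hb1 : b1 i0 = α * (Wbar 0 (Fin.last dx) - η) := by
        simp only [b1, hi0, if_true]
      have hW2 : W2 0 i0 = 1 / (α * sp) := by
        simp only [W2, Matrix.of_apply, hi0, if_true]
      rw [hW1X, hb1, hW2, haug k]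
      have hα' : α ≠ 0 := ne_of_gt hα
      have hsp' : sp ≠ 0 := ne_of_gt hsp
      field_simp
      ring
    · intro j _ hj
      have hjne : (j : ℕ) ≠ 0 := fun h => hj (Fin.ext (h.trans hi0.symm))
      simp only [W2, Matrix.of_apply, hjne, if_false, zero_mul]
    · intro h; exact absurd (Finset.mem_univ i0) h
  have hT : ∀ k, (∑ j, Δt j * X j k) + δt
      = (∑ j : Fin d1, sp * (W2 0 j * ((Δ1 * X) j k + δ1 j)
          + Δ2 0 j * ((W1 * X) j k + (Δ1 * X) j k + b1 j + δ1 j))) + δ2 := by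
    intro k
    have h1 : ∑ j, Δt j * X j k
        = ∑ i : Fin d1, sp * (W2 0 i * (Δ1 * X) i k + Δ2 0 i * (W1 * X) i k
            + Δ2 0 i * (Δ1 * X) i k) := by
      unfold Δt
      rw [show (∑ j : Fin dx, (sp * ∑ i : Fin d1,
          (W2 0 i * Δ1 i j + Δ2 0 i * W1 i j + Δ2 0 i * Δ1 i j)) * X j k)
          = ∑ j : Fin dx, ∑ i : Fin d1,
            sp * (W2 0 i * Δ1 i j + Δ2 0 i * W1 i j + Δ2 0 i * Δ1 i j) * X j k from
        Finset.sum_congr rfl fun j _ => by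
          rw [Finset.mul_sum, Finset.sum_mul]]
      rw [Finset.sum_comm]
      refine Finset.sum_congr rfl fun i _ => ?_
      simp only [Matrix.mul_apply, Finset.mul_sum, ← Finset.sum_add_distrib]
      exact Finset.sum_congr rfl fun j _ => by ring
    rw [h1]
    unfold δt
    rw [Finset.mul_sum]
    have h2 : (∑ i : Fin d1, sp * (W2 0 i * (Δ1 * X) i k + Δ2 0 i * (W1 * X) i k
          + Δ2 0 i * (Δ1 * X) i k))
        + ∑ i : Fin d1, sp * (W2 0 i * δ1 i + Δ2 0 i * b1 i + Δ2 0 i * δ1 i)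
        = ∑ j : Fin d1, sp * (W2 0 j * ((Δ1 * X) j k + δ1 j)
            + Δ2 0 j * ((W1 * X) j k + (Δ1 * X) j k + b1 j + δ1 j)) := by
      rw [← Finset.sum_add_distrib]
      exact Finset.sum_congr rfl fun j _ => by ring
    calc _ = ((∑ i : Fin d1, sp * (W2 0 i * (Δ1 * X) i k + Δ2 0 i * (W1 * X) i k
              + Δ2 0 i * (Δ1 * X) i k))
            + ∑ i : Fin d1, sp * (W2 0 i * δ1 i + Δ2 0 i * b1 i + Δ2 0 i * δ1 i)) + δ2 := by
          ring
      _ = _ := by rw [h2]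
  have hsum : ∀ k, (∑ j, (W2 0 j + Δ2 0 j) *
        act (((W1 + Δ1) * X) j k + (b1 j + δ1 j))) + (η + δ2) - Y 0 k
      = ((Wbar * augOnes X) 0 k - Y 0 k) + ((∑ j, Δt j * X j k) + δt) := by
    intro k
    have h1 : ∀ j, (W2 0 j + Δ2 0 j) * act (((W1 + Δ1) * X) j k + (b1 j + δ1 j))
        = W2 0 j * (sp * ((W1 * X) j k + b1 j))
          + sp * (W2 0 j * ((Δ1 * X) j k + δ1 j)
            + Δ2 0 j * ((W1 * X) j k + (Δ1 * X) j k + b1 j + δ1 j)) := by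
      intro j
      rw [hact _ (hpre j k)]
      have h2 : ((W1 + Δ1) * X) j k = (W1 * X) j k + (Δ1 * X) j k := by
        rw [Matrix.add_mul, Matrix.add_apply]
      rw [h2]; ring
    rw [Finset.sum_congr rfl fun j _ => h1 j, Finset.sum_add_distrib, hW2sum k, hT k]
    ring
  -- the cross-term lemma
  have hcross : ∑ k, ((Wbar * augOnes X) 0 k - Y 0 k) * ((∑ j, Δt j * X j k) + δt) = 0 :=
    cross X Y Wbar hmin Δt δt
  -- conclude
  have hexpand : riskPert = (1 / 2 : ℝ) * ∑ k, ((Wbar * augOnes X) 0 k - Y 0 k) ^ 2 +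
      (1 / 2 : ℝ) * ∑ k, ((∑ j, Δt j * X j k) + δt) ^ 2 := by
    unfold riskPert
    rw [Finset.sum_congr rfl fun k _ => by rw [hsum k]]
    have : ∑ k, (((Wbar * augOnes X) 0 k - Y 0 k) + ((∑ j, Δt j * X j k) + δt)) ^ 2
        = ∑ k, ((Wbar * augOnes X) 0 k - Y 0 k) ^ 2
          + ∑ k, ((∑ j, Δt j * X j k) + δt) ^ 2
          + 2 * ∑ k, ((Wbar * augOnes X) 0 k - Y 0 k) * ((∑ j, Δt j * X j k) + δt) := by
      rw [Finset.mul_sum, ← Finset.sum_add_distrib, ← Finset.sum_add_distrib]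
      exact Finset.sum_congr rfl fun k _ => by ring
    rw [this, hcross]
    ring
  refine ⟨hexpand, ?_⟩
  rw [hexpand]
  have : (0:ℝ) ≤ (1 / 2 : ℝ) * ∑ k, ((∑ j, Δt j * X j k) + δt) ^ 2 := by
    have := Finset.sum_nonneg (fun k (_ : k ∈ Finset.univ) =>
      sq_nonneg ((∑ j, Δt j * X j k) + δt))
    linarith
  linarith
end

section
/- Let h be the ReLU-like activation h(x) = s₊max(x,0) + s₋min(x,0) with s₊ > 0, s₋ ≥ 0, s₊ ≠ s₋. Suppose the output dimension is 1, the data points x_i are distinct, the hidden layer has width d₁ ≥ 2, and no linear model R X̃ can perfectly fit Y. Then the one-hidden-layer network empirical risk ℓ(W₁, W₂, b₁, b₂) = (1/2)‖W₂h(W₁X + b₁𝟙ᵀ) + b₂𝟙ᵀ - Y‖_F² admits a local minimum that is not a global minimum; moreover there exist infinitely many such spurious local minima. -/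
open Finset Matrix

/-- Parameters of a one-hidden-layer network with hidden width `d1`,
input dimension `dx` and output dimension `1`: `(W₁, W₂, b₁, b₂)`. -/
abbrev NetParams (dx d1 : ℕ) :=
  Matrix (Fin d1) (Fin dx) ℝ × Matrix (Fin 1) (Fin d1) ℝ × (Fin d1 → ℝ) × ℝ

lemma exists_lsq (n m : ℕ) (A : Matrix (Fin n) (Fin m) ℝ) (y : Fin m → ℝ) :
    ∃ r : Fin n → ℝ, ∀ s : Fin n → ℝ,
      ∑ k, (∑ i, s i * A i k) * ((∑ i, r i * A i k) - y k) = 0 := by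
  let f : (Fin n → ℝ) →ₗ[ℝ] EuclideanSpace ℝ (Fin m) :=
    { toFun := fun r => WithLp.toLp 2 (fun k => ∑ i, r i * A i k)
      map_add' := by
        intro a b; ext k
        show ∑ i, (a i + b i) * A i k = (∑ i, a i * A i k) + ∑ i, b i * A i k
        rw [← Finset.sum_add_distrib]
        exact Finset.sum_congr rfl fun i _ => by ring
      map_smul' := by
        intro c a; ext k
        show ∑ i, (c * a i) * A i k = c * ∑ i, a i * A i k
        rw [Finset.mul_sum]; exact Finset.sum_congr rfl fun i _ => by ring }
  let K := LinearMap.range f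
  let yE : EuclideanSpace ℝ (Fin m) := WithLp.toLp 2 y
  let p := K.orthogonalProjectionOnto yE
  obtain ⟨r, hr⟩ := p.2
  refine ⟨r, fun s => ?_⟩
  have hmem : f s ∈ K := LinearMap.mem_range_self f s
  have h0 : inner ℝ (yE - (p : EuclideanSpace ℝ (Fin m))) (f s) = (0 : ℝ) :=
    Submodule.starProjection_inner_eq_zero yE (f s) hmem
  have h1 : ∑ k, (yE - (p : EuclideanSpace ℝ (Fin m))) k * (f s) k = 0 := by
    rw [← h0, PiLp.inner_apply]
    exact Finset.sum_congr rfl fun k _ => by simp [RCLike.inner_apply]; ring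
  have h2 : ∀ k, (yE - (p : EuclideanSpace ℝ (Fin m))) k = y k - (∑ i, r i * A i k) := by
    intro k
    have h4 : (p : EuclideanSpace ℝ (Fin m)) k = ∑ i, r i * A i k := by
      rw [← hr]; simp only [f, LinearMap.coe_mk, AddHom.coe_mk, PiLp.toLp_apply]
    rw [PiLp.sub_apply, h4]
  have h3 : ∀ k, (f s) k = ∑ i, s i * A i k := fun k => rfl
  calc ∑ k, (∑ i, s i * A i k) * ((∑ i, r i * A i k) - y k)
      = -∑ k, ((yE - (p : EuclideanSpace ℝ (Fin m))) k) * (f s) k := by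
        rw [← Finset.sum_neg_distrib]
        refine Finset.sum_congr rfl fun k _ => ?_
        rw [h2 k, h3 k]; ring
    _ = 0 := by rw [h1]; ring

lemma exists_sep (dx : ℕ) (s : Finset (Fin dx → ℝ)) :
    ∀ (_ : ∀ d ∈ s, d ≠ 0), ∃ v : Fin dx → ℝ, ∀ d ∈ s, ∑ i, v i * d i ≠ 0 := by
  induction s using Finset.induction_on with
  | empty => exact fun _ => ⟨0, fun d hd => absurd hd (Finset.notMem_empty d)⟩
  | @insert a s ha ih =>
    intro hs
    obtain ⟨v, hv⟩ := ih (fun d hd => hs d (Finset.mem_insert_of_mem hd))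
    have haa : (∑ i, a i * a i) ≠ 0 := by
      intro h
      have hnn : ∀ i ∈ Finset.univ, (0:ℝ) ≤ a i * a i := fun i _ => mul_self_nonneg _
      have := (Finset.sum_eq_zero_iff_of_nonneg hnn).1 h
      refine hs a (Finset.mem_insert_self a s) (funext fun i => ?_)
      have h5 := this i (Finset.mem_univ i)
      show a i = 0
      nlinarith [h5]
    set bad : Finset ℝ :=
      insert (-(∑ i, v i * a i)/(∑ i, a i * a i))
        (s.image fun d => -(∑ i, v i * d i)/(∑ i, a i * d i)) with hbad
    obtain ⟨t, ht⟩ := Infinite.exists_notMem_finset bad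
    refine ⟨fun i => v i + t * a i, fun d hd => ?_⟩
    have hexp : ∀ d : Fin dx → ℝ,
        ∑ i, (v i + t * a i) * d i = (∑ i, v i * d i) + t * ∑ i, a i * d i := by
      intro d
      rw [Finset.mul_sum, ← Finset.sum_add_distrib]
      exact Finset.sum_congr rfl fun i _ => by ring
    rcases Finset.mem_insert.1 hd with rfl | hd
    · rw [hexp]
      intro h
      apply ht
      have : t = -(∑ i, v i * d i)/(∑ i, d i * d i) := by
        rw [eq_div_iff haa]
        linarith [h]
      rw [hbad, this]
      exact Finset.mem_insert_self _ _
    · rw [hexp]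
      intro h
      by_cases hz : (∑ i, a i * d i) = 0
      · rw [hz] at h; simp at h; exact hv d hd h
      · apply ht
        have : t = -(∑ i, v i * d i)/(∑ i, a i * d i) := by
          field_simp
          linarith [h]
        rw [hbad, this]
        exact Finset.mem_insert_of_mem (Finset.mem_image_of_mem _ hd)

lemma sum_sq_expand {m : ℕ} (g e : Fin m → ℝ) :
    ∑ k, (g k + e k)^2 = ∑ k, (g k)^2 + 2*(∑ k, g k * e k) + ∑ k, (e k)^2 := by
  rw [Finset.mul_sum, ← Finset.sum_add_distrib, ← Finset.sum_add_distrib]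
  exact Finset.sum_congr rfl fun k _ => by ring

lemma lsq_min {n m : ℕ} (A : Matrix (Fin n) (Fin m) ℝ) (y : Fin m → ℝ) (r : Fin n → ℝ)
    (Horth : ∀ s : Fin n → ℝ, ∑ k, (∑ i, s i * A i k) * ((∑ i, r i * A i k) - y k) = 0)
    (rr : Fin n → ℝ) :
    ∑ k, ((∑ i, r i * A i k) - y k)^2 ≤ ∑ k, ((∑ i, rr i * A i k) - y k)^2 := by
  set e : Fin m → ℝ := fun k => (∑ i, r i * A i k) - y k with he
  set g : Fin m → ℝ := fun k => (∑ i, rr i * A i k) - (∑ i, r i * A i k) with hg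
  have h1 : ∀ k, (∑ i, rr i * A i k) - y k = g k + e k := fun k => by
    simp only [he, hg]; ring
  have hge : ∑ k, g k * e k = 0 := by
    have h2 := Horth rr; have h3 := Horth r
    calc ∑ k, g k * e k
        = ∑ k, ((∑ i, rr i * A i k) * e k - (∑ i, r i * A i k) * e k) :=
          Finset.sum_congr rfl fun k _ => by simp only [hg]; ring
      _ = (∑ k, (∑ i, rr i * A i k) * e k) - ∑ k, (∑ i, r i * A i k) * e k :=
          Finset.sum_sub_distrib _ _
      _ = 0 := by rw [h2, h3]; ring
  have h4 : ∑ k, ((∑ i, rr i * A i k) - y k)^2 = ∑ k, (g k + e k)^2 :=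
    Finset.sum_congr rfl fun k _ => by rw [h1 k]
  rw [h4, sum_sq_expand, hge]
  have h5 : 0 ≤ ∑ k, (g k)^2 := Finset.sum_nonneg fun k _ => sq_nonneg _
  linarith

lemma augOnes_castSucc {dx m : ℕ} (X : Matrix (Fin dx) (Fin m) ℝ) (i : Fin dx) (k : Fin m) :
    augOnes X i.castSucc k = X i k := by
  have h1 : ((i.castSucc : Fin (dx+1)) : ℕ) < dx := by simpa using i.isLt
  simp only [augOnes, Matrix.of_apply]
  rw [dif_pos h1]
  have h2 : (⟨↑i.castSucc, h1⟩ : Fin dx) = i := Fin.ext (by simp)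
  rw [h2]

lemma augOnes_last {dx m : ℕ} (X : Matrix (Fin dx) (Fin m) ℝ) (k : Fin m) :
    augOnes X (Fin.last dx) k = 1 := by
  simp [augOnes, Matrix.of_apply]

lemma aug_affine {dx m : ℕ} (X : Matrix (Fin dx) (Fin m) ℝ) (v : Fin dx → ℝ) (c : ℝ) (k : Fin m) :
    ∑ i : Fin (dx+1), (if h : (i:ℕ) < dx then v ⟨i,h⟩ else c) * augOnes X i k
      = (∑ i, v i * X i k) + c := by
  rw [Fin.sum_univ_castSucc]
  congr 1
  · refine Finset.sum_congr rfl fun i _ => ?_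
    have h1 : ((i.castSucc : Fin (dx+1)) : ℕ) < dx := by simpa using i.isLt
    rw [augOnes_castSucc, dif_pos h1]
    have h2 : (⟨↑i.castSucc, h1⟩ : Fin dx) = i := Fin.ext (by simp)
    rw [h2]
  · have h2 : ¬ (((Fin.last dx) : ℕ) < dx) := by simp
    rw [augOnes_last, dif_neg h2, mul_one]

lemma swap_sum {d1 dx m : ℕ} (W2 : Fin d1 → ℝ) (W1 : Matrix (Fin d1) (Fin dx) ℝ)
    (X : Matrix (Fin dx) (Fin m) ℝ) (b1 : Fin d1 → ℝ) (sp b2 : ℝ) (k : Fin m) :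
    (∑ j, sp * (W2 j * ((∑ i, W1 j i * X i k) + b1 j))) + b2
      = (∑ i, (sp * ∑ j, W2 j * W1 j i) * X i k) + (sp * (∑ j, W2 j * b1 j) + b2) := by
  have h1 : ∀ j, sp * (W2 j * ((∑ i, W1 j i * X i k) + b1 j))
      = (∑ i, sp * (W2 j * (W1 j i * X i k))) + sp * (W2 j * b1 j) := by
    intro j
    have e1 : sp * (W2 j * (∑ i, W1 j i * X i k)) = ∑ i, sp * (W2 j * (W1 j i * X i k)) := by
      rw [Finset.mul_sum, Finset.mul_sum]
    calc sp * (W2 j * ((∑ i, W1 j i * X i k) + b1 j))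
        = sp * (W2 j * (∑ i, W1 j i * X i k)) + sp * (W2 j * b1 j) := by ring
      _ = (∑ i, sp * (W2 j * (W1 j i * X i k))) + sp * (W2 j * b1 j) := by rw [e1]
  calc (∑ j, sp * (W2 j * ((∑ i, W1 j i * X i k) + b1 j))) + b2
      = (∑ j, ((∑ i, sp * (W2 j * (W1 j i * X i k))) + sp * (W2 j * b1 j))) + b2 := by
        rw [Finset.sum_congr rfl fun j _ => h1 j]
    _ = (∑ j, ∑ i, sp * (W2 j * (W1 j i * X i k))) + ((∑ j, sp * (W2 j * b1 j)) + b2) := by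
        rw [Finset.sum_add_distrib]; ring
    _ = (∑ i, ∑ j, sp * (W2 j * (W1 j i * X i k))) + ((∑ j, sp * (W2 j * b1 j)) + b2) := by
        rw [Finset.sum_comm]
    _ = (∑ i, (sp * ∑ j, W2 j * W1 j i) * X i k) + (sp * (∑ j, W2 j * b1 j) + b2) := by
      congr 1
      · refine Finset.sum_congr rfl fun i _ => ?_
        rw [Finset.mul_sum, Finset.sum_mul]
        exact Finset.sum_congr rfl fun j _ => by ring
      · rw [Finset.mul_sum]

set_option maxHeartbeats 1000000 in
/-- Theorem 1: for ReLU-like activations, if linear models cannot fit the data,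
there exist infinitely many spurious (non-global) local minima of the empirical risk. -/
theorem stmt6 (dx d1 m : ℕ) (hd1 : 2 ≤ d1)
    (sp sm : ℝ) (hsp : 0 < sp) (hsm : 0 ≤ sm) (hne : sp ≠ sm)
    (X : Matrix (Fin dx) (Fin m) ℝ) (Y : Matrix (Fin 1) (Fin m) ℝ)
    (hdist : ∀ k k' : Fin m, k ≠ k' → (fun i => X i k) ≠ (fun i => X i k'))
    (hnofit : ∀ R : Matrix (Fin 1) (Fin (dx + 1)) ℝ, R * augOnes X ≠ Y) :
    let act : ℝ → ℝ := fun x => max (sp * x) 0 + min (sm * x) 0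
    let L : NetParams dx d1 → ℝ := fun p =>
      (1 / 2 : ℝ) * ∑ k,
        ((∑ j, p.2.1 0 j * act ((p.1 * X) j k + p.2.2.1 j)) + p.2.2.2 - Y 0 k) ^ 2
    let IsLocMin : NetParams dx d1 → Prop := fun p₀ =>
      ∃ ε > (0 : ℝ), ∀ p : NetParams dx d1,
        (∀ i j, |p.1 i j - p₀.1 i j| ≤ ε) → (∀ j, |p.2.1 0 j - p₀.2.1 0 j| ≤ ε) →
        (∀ j, |p.2.2.1 j - p₀.2.2.1 j| ≤ ε) → |p.2.2.2 - p₀.2.2.2| ≤ ε →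
        L p₀ ≤ L p
    {p : NetParams dx d1 | IsLocMin p ∧ ∃ q : NetParams dx d1, L q < L p}.Infinite := by
  intro act L IsLocMin
  have hsp' : sp ≠ 0 := ne_of_gt hsp
  have hL : ∀ p : NetParams dx d1, L p = (1 / 2 : ℝ) * ∑ k,
      ((∑ j, p.2.1 0 j * act ((∑ i, p.1 j i * X i k) + p.2.2.1 j)) + p.2.2.2 - Y 0 k) ^ 2 := by
    intro p
    show (1 / 2 : ℝ) * ∑ k, ((∑ j, p.2.1 0 j * act ((p.1 * X) j k + p.2.2.1 j)) + p.2.2.2 - Y 0 k) ^ 2 = _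
    simp only [Matrix.mul_apply]
  have hact : ∀ z : ℝ, act z = sp * z + (sm - sp) * min z 0 := by
    intro z
    show max (sp * z) 0 + min (sm * z) 0 = _
    rcases le_total z 0 with h | h
    · rw [max_eq_right (by nlinarith), min_eq_left (by nlinarith), min_eq_left h]; ring
    · rw [max_eq_left (by nlinarith), min_eq_right (by nlinarith), min_eq_right h]; ring
  have hactpos : ∀ z : ℝ, 0 ≤ z → act z = sp * z := by
    intro z hz
    rw [hact z, min_eq_right hz]; ring
  set A := augOnes X with hA
  obtain ⟨r, Horth⟩ := exists_lsq (dx+1) m A (fun k => Y 0 k)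
  set e : Fin m → ℝ := fun k => (∑ i, r i * A i k) - Y 0 k with he
  have Horth2 : ∀ s : Fin (dx+1) → ℝ, ∑ k, (∑ i, s i * A i k) * e k = 0 := Horth
  have Horth' : ∀ (vv : Fin dx → ℝ) (cc : ℝ), ∑ k, ((∑ i, vv i * X i k) + cc) * e k = 0 := by
    intro vv cc
    have h1 := Horth2 (fun i => if h : (i:ℕ) < dx then vv ⟨i,h⟩ else cc)
    rw [← h1]
    exact Finset.sum_congr rfl fun k _ => by rw [aug_affine X vv cc k]
  have hex : ∃ k, e k ≠ 0 := by
    by_contra h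
    push_neg at h
    apply hnofit (Matrix.of fun _ i => r i)
    ext o k
    have ho : o = 0 := Subsingleton.elim o 0
    have h2 : (∑ i, r i * A i k) - Y 0 k = 0 := by
      have h3 := h k
      rw [he] at h3
      exact h3
    rw [Matrix.mul_apply, ho]
    simp only [Matrix.of_apply]
    linarith
  have hsum : ∑ k, e k = 0 := by
    have h1 := Horth' 0 1
    rw [← h1]
    exact Finset.sum_congr rfl fun k _ => by simp
  obtain ⟨k₁, hk₁⟩ := hex
  have hex2 : ∃ k₂, k₂ ≠ k₁ ∧ e k₂ ≠ 0 := by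
    by_contra h
    push_neg at h
    have h1 : ∑ k, e k = e k₁ :=
      Finset.sum_eq_single k₁ (fun b _ hb => h b hb) (fun h' => absurd (Finset.mem_univ k₁) h')
    rw [hsum] at h1
    exact hk₁ h1.symm
  obtain ⟨k₂, hk₂ne, hk₂⟩ := hex2
  set D : Finset (Fin dx → ℝ) :=
    Finset.univ.offDiag.image (fun q : Fin m × Fin m => fun i => X i q.1 - X i q.2) with hD
  have hDne : ∀ d ∈ D, d ≠ 0 := by
    intro d hd
    rw [hD] at hd
    obtain ⟨p, hp, rfl⟩ := Finset.mem_image.1 hd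
    obtain ⟨-, -, hpne⟩ := Finset.mem_offDiag.1 hp
    intro h0
    apply hdist p.1 p.2 hpne
    funext i
    have h1 := congrFun h0 i
    simp only [Pi.zero_apply] at h1
    show X i p.1 = X i p.2
    linarith
  obtain ⟨v, hvsep⟩ := exists_sep dx D hDne
  set t : Fin m → ℝ := fun k => ∑ i, v i * X i k with ht
  have tinj : ∀ k k' : Fin m, k ≠ k' → t k ≠ t k' := by
    intro k k' hkk h
    have hmem : (fun i => X i k - X i k') ∈ D := by
      rw [hD]
      exact Finset.mem_image_of_mem _
        (show (k, k') ∈ Finset.univ.offDiag from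
          Finset.mem_offDiag.2 ⟨Finset.mem_univ _, Finset.mem_univ _, hkk⟩)
    apply hvsep _ hmem
    have h1 : ∑ i, v i * (X i k - X i k') = t k - t k' := by
      rw [ht, ← Finset.sum_sub_distrib]
      exact Finset.sum_congr rfl fun i _ => by ring
    rw [h1, h, sub_self]
  set K : Finset (Fin m) := Finset.univ.filter (fun k => e k ≠ 0) with hKdef
  have hk₁K : k₁ ∈ K := Finset.mem_filter.2 ⟨Finset.mem_univ _, hk₁⟩
  have hk₂K : k₂ ∈ K := Finset.mem_filter.2 ⟨Finset.mem_univ _, hk₂⟩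
  obtain ⟨ks, hksK, hksmax⟩ := K.exists_max_image t ⟨k₁, hk₁K⟩
  set K' := K.erase ks with hK'
  have hK'ne : K'.Nonempty := by
    rcases eq_or_ne k₁ ks with h | h
    · exact ⟨k₂, Finset.mem_erase.2 ⟨by rw [← h]; exact hk₂ne, hk₂K⟩⟩
    · exact ⟨k₁, Finset.mem_erase.2 ⟨h, hk₁K⟩⟩
  set Tm := K'.sup' hK'ne t with hTm
  have hTmlt : Tm < t ks := by
    obtain ⟨k₀, hk₀, hTmeq⟩ := Finset.exists_mem_eq_sup' hK'ne t
    rw [hTm, hTmeq]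
    exact lt_of_le_of_ne (hksmax k₀ (Finset.mem_of_mem_erase hk₀))
      (tinj _ _ (Finset.ne_of_mem_erase hk₀))
  set c : ℝ := (Tm + t ks)/2 with hc
  have hcK' : ∀ k, k ∈ K' → t k < c := by
    intro k hk
    have h1 : t k ≤ Tm := Finset.le_sup' t hk
    rw [hc]
    linarith
  have hcks : c < t ks := by
    rw [hc]; linarith
  set u : Fin m → ℝ := fun k => act (t k - c) with hu
  set γ := ∑ k, e k * u k with hγdef
  have hγ : γ ≠ 0 := by
    have hstep1 : γ = sp * (∑ k, e k * (t k - c)) + (sm - sp) * ∑ k, e k * min (t k - c) 0 := by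
      rw [hγdef, Finset.mul_sum, Finset.mul_sum, ← Finset.sum_add_distrib]
      refine Finset.sum_congr rfl fun k _ => ?_
      simp only [hu]
      rw [hact]
      ring
    have hstep2 : ∑ k, e k * (t k - c) = 0 := by
      have h0 : ∑ k, e k * (t k - c) = ∑ k, ((∑ i, v i * X i k) + (-c)) * e k :=
        Finset.sum_congr rfl fun k _ => by rw [ht]; ring
      rw [h0, Horth']
    have hstep3 : ∑ k, e k * min (t k - c) 0 = -(e ks * (t ks - c)) := by
      have hmin : ∀ k, e k * min (t k - c) 0
          = e k * (t k - c) - (if c < t k then e k * (t k - c) else 0) := by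
        intro k
        by_cases h : c < t k
        · rw [if_pos h, min_eq_right (by linarith)]; ring
        · push_neg at h
          rw [if_neg (not_lt.2 h), min_eq_left (by linarith)]; ring
      have hif : ∑ k, (if c < t k then e k * (t k - c) else 0)
          = if c < t ks then e ks * (t ks - c) else 0 := by
        refine Finset.sum_eq_single (f := fun k => if c < t k then e k * (t k - c) else 0)
          ks (fun b _ hb => ?_) (fun h' => absurd (Finset.mem_univ ks) h')
        show (if c < t b then e b * (t b - c) else 0) = 0
        by_cases hcb : c < t b
        · have hbe : e b = 0 := by
            by_contra hbe
            have hbK' : b ∈ K' := Finset.mem_erase.2 ⟨hb, Finset.mem_filter.2 ⟨Finset.mem_univ _, hbe⟩⟩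
            exact absurd (hcK' b hbK') (by linarith)
          rw [if_pos hcb, hbe, zero_mul]
        · rw [if_neg hcb]
      rw [Finset.sum_congr rfl fun k _ => hmin k, Finset.sum_sub_distrib, hstep2, hif,
        if_pos hcks]
      ring
    rw [hstep1, hstep2, hstep3]
    have h1 : sm - sp ≠ 0 := sub_ne_zero.2 (Ne.symm hne)
    have h2 : e ks ≠ 0 := (Finset.mem_filter.1 hksK).2
    have h3 : t ks - c ≠ 0 := ne_of_gt (by linarith)
    have h4 : -(e ks * (t ks - c)) ≠ 0 := neg_ne_zero.2 (mul_ne_zero h2 h3)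
    rw [mul_zero, zero_add]
    exact mul_ne_zero h1 h4
  set N := ∑ k, (u k)^2 with hN
  have hNnn : 0 ≤ N := Finset.sum_nonneg fun k _ => sq_nonneg _
  set α : ℝ := -γ/(N+1) with hα
  set L₀ : ℝ := (1/2) * ∑ k, (e k)^2 with hL₀def
  set w : Fin dx → ℝ := fun i => r i.castSucc / sp with hw
  set rl : ℝ := r (Fin.last dx) with hrl
  have hfr : ∀ k, (∑ i, r i * A i k) = (∑ i, (sp * w i) * X i k) + rl := by
    intro k
    have h1 : ∀ i : Fin (dx+1),
        r i = (if h : (i:ℕ) < dx then (fun i' => sp * w i') ⟨i,h⟩ else rl) := by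
      intro i
      by_cases h : (i:ℕ) < dx
      · rw [dif_pos h]
        show r i = sp * w ⟨(i:ℕ), h⟩
        rw [hw]
        show r i = sp * (r (⟨(i:ℕ), h⟩ : Fin dx).castSucc / sp)
        have h2 : (⟨(i:ℕ), h⟩ : Fin dx).castSucc = i := Fin.ext (by simp)
        rw [h2]
        field_simp
      · rw [dif_neg h, hrl]
        have h2 : i = Fin.last dx := Fin.ext (by
          have := i.isLt
          simp only [Fin.val_last]
          omega)
        rw [h2]
    calc ∑ i, r i * A i k
        = ∑ i : Fin (dx+1), (if h : (i:ℕ) < dx then (fun i' => sp * w i') ⟨i,h⟩ else rl) * A i k :=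
          Finset.sum_congr rfl fun i _ => by rw [← h1 i]
      _ = (∑ i, (sp * w i) * X i k) + rl := by
          rw [hA]; exact aug_affine X (fun i' => sp * w i') rl k
  set B₀ : ℝ := (∑ k, |∑ i, w i * X i k|) + 1 with hB₀
  have hB₀k : ∀ k, |∑ i, w i * X i k| ≤ B₀ - 1 := by
    intro k
    rw [hB₀]
    have h1 : |∑ i, w i * X i k| ≤ ∑ k, |∑ i, w i * X i k| := Finset.single_le_sum (f := fun k => |∑ i, w i * X i k|)
      (fun k _ => abs_nonneg _) (Finset.mem_univ k)
    linarith
  set M : ℝ := ∑ k, ∑ i, |X i k| with hM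
  have hMk : ∀ k, (∑ i, |X i k|) ≤ M := by
    intro k
    rw [hM]
    exact Finset.single_le_sum (f := fun k => ∑ i, |X i k|)
      (fun k _ => Finset.sum_nonneg fun i _ => abs_nonneg _) (Finset.mem_univ k)
  have hMnn : (0:ℝ) ≤ M := by
    rw [hM]
    exact Finset.sum_nonneg fun k _ => Finset.sum_nonneg fun i _ => abs_nonneg _
  set ε : ℝ := 1/(M+2) with hε
  have hεpos : 0 < ε := by
    rw [hε]
    apply div_pos one_pos
    linarith
  have keyA : ∀ p : NetParams dx d1,
      (∀ j k, 0 ≤ (∑ i, p.1 j i * X i k) + p.2.2.1 j) → L₀ ≤ L p := by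
    intro p hp
    set rr : Fin (dx+1) → ℝ := fun i =>
      if h : (i:ℕ) < dx then sp * ∑ j, p.2.1 0 j * p.1 j ⟨i,h⟩
      else sp * (∑ j, p.2.1 0 j * p.2.2.1 j) + p.2.2.2 with hrr
    have hout : ∀ k, (∑ j, p.2.1 0 j * act ((∑ i, p.1 j i * X i k) + p.2.2.1 j)) + p.2.2.2
        = ∑ i, rr i * A i k := by
      intro k
      have h1 : ∀ j, p.2.1 0 j * act ((∑ i, p.1 j i * X i k) + p.2.2.1 j)
          = sp * (p.2.1 0 j * ((∑ i, p.1 j i * X i k) + p.2.2.1 j)) := fun j => by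
        rw [hactpos _ (hp j k)]; ring
      rw [Finset.sum_congr rfl fun j _ => h1 j, swap_sum]
      have h2 : ∑ i, rr i * A i k
          = (∑ i, (sp * ∑ j, p.2.1 0 j * p.1 j i) * X i k)
            + (sp * (∑ j, p.2.1 0 j * p.2.2.1 j) + p.2.2.2) := by
        rw [hrr, hA]
        exact aug_affine X (fun i' => sp * ∑ j, p.2.1 0 j * p.1 j i') _ k
      rw [h2]
    rw [hL p, hL₀def]
    have h3 : ∑ k, ((∑ j, p.2.1 0 j * act ((∑ i, p.1 j i * X i k) + p.2.2.1 j)) + p.2.2.2 - Y 0 k)^2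
        = ∑ k, ((∑ i, rr i * A i k) - Y 0 k)^2 :=
      Finset.sum_congr rfl fun k _ => by rw [hout k]
    rw [h3]
    have h4 := lsq_min A (fun k => Y 0 k) r Horth rr
    have h5 : ∑ k, (e k)^2 = ∑ k, ((∑ i, r i * A i k) - Y 0 k)^2 :=
      Finset.sum_congr rfl fun k _ => by rw [he]
    rw [h5]
    linarith
  obtain ⟨j0, j1, hj01⟩ : ∃ j0 j1 : Fin d1, j0 ≠ j1 :=
    ⟨⟨0, by omega⟩, ⟨1, by omega⟩, by
      intro h
      have := congrArg Fin.val h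
      simp at this⟩
  have hek : ∀ k, e k = (∑ i, sp * w i * X i k) + rl - Y 0 k := by
    intro k
    rw [he]
    show (∑ i, r i * A i k) - Y 0 k = _
    rw [hfr k]
  have hspw : ∀ k, ∑ i, sp * w i * X i k = sp * ∑ i, w i * X i k := by
    intro k
    rw [Finset.mul_sum]
    exact Finset.sum_congr rfl fun i _ => by ring
  set p₀ : ℕ → NetParams dx d1 := fun n =>
    (Matrix.of fun _ i => w i, Matrix.of fun _ j => if j = j0 then (1:ℝ) else 0,
     fun _ => B₀ + n, rl - sp * (B₀ + n)) with hp₀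
  have hLp₀ : ∀ n, L (p₀ n) = L₀ := by
    intro n
    have hk : ∀ k, (∑ j, (p₀ n).2.1 0 j * act ((∑ i, (p₀ n).1 j i * X i k) + (p₀ n).2.2.1 j))
        + (p₀ n).2.2.2 - Y 0 k = e k := by
      intro k
      have hterm : ∀ j, (p₀ n).2.1 0 j * act ((∑ i, (p₀ n).1 j i * X i k) + (p₀ n).2.2.1 j)
          = if j = j0 then act ((∑ i, w i * X i k) + (B₀ + n)) else 0 := by
        intro j
        show (if j = j0 then (1:ℝ) else 0) * act ((∑ i, w i * X i k) + (B₀ + n)) = _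
        by_cases h : j = j0
        · rw [if_pos h, if_pos h, one_mul]
        · rw [if_neg h, if_neg h, zero_mul]
      rw [Finset.sum_congr rfl fun j _ => hterm j, Finset.sum_ite_eq' Finset.univ j0]
      simp only [Finset.mem_univ, if_true]
      have hpos : (0:ℝ) ≤ (∑ i, w i * X i k) + (B₀ + n) := by
        have h2 := abs_le.1 (hB₀k k)
        have h3 : (0:ℝ) ≤ (n:ℝ) := Nat.cast_nonneg n
        linarith [h2.1]
      rw [hactpos _ hpos]
      show sp * ((∑ i, w i * X i k) + (B₀ + n)) + (rl - sp * (B₀ + n)) - Y 0 k = e k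
      rw [hek k, hspw k]
      ring
    rw [hL (p₀ n), hL₀def]
    congr 1
    exact Finset.sum_congr rfl fun k _ => by rw [hk k]
  have hloc : ∀ n, IsLocMin (p₀ n) := by
    intro n
    refine ⟨ε, hεpos, ?_⟩
    intro p hW1 hW2 hb1 hb2
    rw [hLp₀ n]
    apply keyA p
    intro j k
    have hd : |∑ i, (p.1 j i - w i) * X i k| ≤ ε * M := by
      calc |∑ i, (p.1 j i - w i) * X i k| ≤ ∑ i, |(p.1 j i - w i) * X i k| :=
            Finset.abs_sum_le_sum_abs _ _
        _ ≤ ∑ i, ε * |X i k| := Finset.sum_le_sum fun i _ => by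
            rw [abs_mul]
            refine mul_le_mul_of_nonneg_right ?_ (abs_nonneg _)
            have h6 := hW1 j i
            exact h6
        _ = ε * ∑ i, |X i k| := by rw [Finset.mul_sum]
        _ ≤ ε * M := mul_le_mul_of_nonneg_left (hMk k) (le_of_lt hεpos)
    have hsplit : ∑ i, p.1 j i * X i k = (∑ i, w i * X i k) + ∑ i, (p.1 j i - w i) * X i k := by
      rw [← Finset.sum_add_distrib]
      exact Finset.sum_congr rfl fun i _ => by ring
    have hb : |p.2.2.1 j - (B₀ + n)| ≤ ε := hb1 j
    have h2 := abs_le.1 (hB₀k k)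
    have h3 := abs_le.1 hd
    have h4 := abs_le.1 hb
    have hεM : ε * (M + 1) < 1 := by
      rw [hε, div_mul_eq_mul_div, div_lt_one (by linarith)]
      linarith
    have hεM' : ε * M + ε < 1 := by nlinarith [hεM]
    have h5 : (0:ℝ) ≤ (n:ℝ) := Nat.cast_nonneg n
    rw [hsplit]
    linarith [h2.1, h3.1, h4.1]
  set q : NetParams dx d1 :=
    (Matrix.of fun j i => if j = j0 then w i else if j = j1 then v i else 0,
     Matrix.of fun _ j => if j = j0 then (1:ℝ) else if j = j1 then α else 0,
     (fun j => if j = j0 then B₀ else if j = j1 then -c else 0),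
     rl - sp * B₀) with hqdef
  have hqout : ∀ k, (∑ j, q.2.1 0 j * act ((∑ i, q.1 j i * X i k) + q.2.2.1 j)) + q.2.2.2 - Y 0 k
      = e k + α * u k := by
    intro k
    have hterm : ∀ j, q.2.1 0 j * act ((∑ i, q.1 j i * X i k) + q.2.2.1 j)
        = (if j = j0 then act ((∑ i, w i * X i k) + B₀) else 0)
          + (if j = j1 then α * act ((∑ i, v i * X i k) + (-c)) else 0) := by
      intro j
      show (if j = j0 then (1:ℝ) else if j = j1 then α else 0)
          * act ((∑ i, (if j = j0 then w i else if j = j1 then v i else 0) * X i k)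
            + (if j = j0 then B₀ else if j = j1 then -c else 0)) = _
      by_cases h : j = j0
      · rw [h]; simp [hj01]
      · by_cases h' : j = j1
        · rw [h']; simp [Ne.symm hj01]
        · simp [h, h']
    rw [Finset.sum_congr rfl fun j _ => hterm j, Finset.sum_add_distrib,
      Finset.sum_ite_eq' Finset.univ j0, Finset.sum_ite_eq' Finset.univ j1]
    simp only [Finset.mem_univ, if_true]
    have hpos : (0:ℝ) ≤ (∑ i, w i * X i k) + B₀ := by
      have h2 := abs_le.1 (hB₀k k)
      linarith [h2.1]
    rw [hactpos _ hpos]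
    have h7 : (∑ i, v i * X i k) + (-c) = t k - c := by rw [ht]; ring
    rw [h7]
    have h8 : act (t k - c) = u k := by simp only [hu]
    rw [h8]
    show sp * ((∑ i, w i * X i k) + B₀) + α * u k + (rl - sp * B₀) - Y 0 k = e k + α * u k
    rw [hek k, hspw k]
    ring
  have hqlt : L q < L₀ := by
    rw [hL q]
    have h8 : ∑ k, ((∑ j, q.2.1 0 j * act ((∑ i, q.1 j i * X i k) + q.2.2.1 j)) + q.2.2.2 - Y 0 k)^2
        = ∑ k, (e k + α * u k)^2 :=
      Finset.sum_congr rfl fun k _ => by rw [hqout k]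
    rw [h8]
    have h9 : ∑ k, (e k + α * u k)^2 = (∑ k, (e k)^2) + 2*(α*γ) + α^2 * N := by
      have h10 := sum_sq_expand (fun k => e k) (fun k => α * u k)
      have h11 : ∑ k, e k * (α * u k) = α * γ := by
        rw [hγdef, Finset.mul_sum]
        exact Finset.sum_congr rfl fun k _ => by ring
      have h12 : ∑ k, (α * u k)^2 = α^2 * N := by
        rw [hN, Finset.mul_sum]
        exact Finset.sum_congr rfl fun k _ => by ring
      calc ∑ k, (e k + α * u k)^2
          = ∑ k, ((fun k => e k) k + (fun k => α * u k) k)^2 := rfl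
        _ = ∑ k, (e k)^2 + 2*(∑ k, e k * (α * u k)) + ∑ k, (α * u k)^2 := h10
        _ = (∑ k, (e k)^2) + 2*(α*γ) + α^2 * N := by rw [h11, h12]
    rw [h9, hL₀def]
    have hval : α*γ + α^2*N/2 = -(γ^2*(N+2))/(2*(N+1)^2) := by
      rw [hα]
      have hN1 : (N:ℝ) + 1 ≠ 0 := by linarith
      field_simp
      ring
    have hγ2 : (0:ℝ) < γ^2 :=
      lt_of_le_of_ne (sq_nonneg γ) (Ne.symm (pow_ne_zero 2 hγ))
    have hnum : -(γ^2*(N+2)) < 0 := by nlinarith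
    have hden : (0:ℝ) < 2*(N+1)^2 := by positivity
    have hlt : α*γ + α^2*N/2 < 0 := by
      rw [hval]
      exact div_neg_of_neg_of_pos hnum hden
    linarith
  apply Set.infinite_of_injective_forall_mem (f := fun n : ℕ => p₀ n)
  · intro a b hab
    have h1 : rl - sp * (B₀ + (a:ℝ)) = rl - sp * (B₀ + (b:ℝ)) :=
      congrArg (fun p : NetParams dx d1 => p.2.2.2) hab
    have h2 : (a:ℝ) = b := by
      have h3 : sp * (B₀ + (a:ℝ)) = sp * (B₀ + (b:ℝ)) := by linarith
      have h4 := mul_left_cancel₀ hsp' h3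
      linarith
    exact_mod_cast h2
  · intro n
    exact ⟨hloc n, ⟨q, by rw [hLp₀ n]; exact hqlt⟩⟩
end

section
/- Sort data so that the least-squares predictions satisfy ȳ₁ ≤ ... ≤ ȳ_m and suppose the set I = { j ∈ [m-1] : Σ_{i≤j}(ȳ_i - y_i) ≠ 0 and ȳ_j < ȳ_{j+1} } is empty, while no linear model fits Y exactly. Then: (1) some ȳ_j values are duplicated; (2) if ȳ_{j-1} < ȳ_j < ȳ_{j+1} then ȳ_j = y_j; (3) for any duplicate value v, Σ_{i: ȳ_i = v}(ȳ_i - y_i) = 0; (4) there exists a duplicate value v with at least two distinct indices i satisfying ȳ_i = v and ȳ_i ≠ y_i. -/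
open Finset

/-- Lemma A.1: properties of sorted least-squares predictions when the index set
`I` is empty and linear models cannot fit the data exactly. -/
theorem stmt7 (dx m : ℕ) (x : Fin m → Fin dx → ℝ) (y ybar : Fin m → ℝ)
    (hmono : Monotone ybar)
    (hsum : ∑ i, (ybar i - y i) = 0)
    (hxsum : ∀ c : Fin dx, ∑ i, (ybar i - y i) * x i c = 0)
    (hnofit : ∃ i, ybar i ≠ y i)
    (hIempty : ∀ (j : Fin m) (hj : (j : ℕ) + 1 < m),
      ¬((∑ i ∈ Finset.univ.filter (fun i => i ≤ j), (ybar i - y i)) ≠ 0 ∧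
        ybar j < ybar ⟨(j : ℕ) + 1, hj⟩)) :
    -- (1) some predicted values are duplicated
    (∃ i j : Fin m, i ≠ j ∧ ybar i = ybar j) ∧
    -- (2) a non-duplicate prediction must equal its label
    (∀ (j : Fin m) (h0 : 0 < (j : ℕ)) (hj : (j : ℕ) + 1 < m),
      ybar ⟨(j : ℕ) - 1, by omega⟩ < ybar j → ybar j < ybar ⟨(j : ℕ) + 1, hj⟩ →
      ybar j = y j) ∧
    -- (3) the residuals within each duplicate value sum to zero
    (∀ v : ℝ, (∃ i j : Fin m, i ≠ j ∧ ybar i = v ∧ ybar j = v) →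
      ∑ i ∈ Finset.univ.filter (fun i => ybar i = v), (ybar i - y i) = 0) ∧
    -- (4) some duplicate value contains two indices with nonzero residuals
    (∃ (v : ℝ) (i j : Fin m), i ≠ j ∧ ybar i = v ∧ ybar j = v ∧
      ybar i ≠ y i ∧ ybar j ≠ y j) := by
  classical
  -- prefix sums vanish at strict increases
  have key : ∀ (j : Fin m) (hj : (j : ℕ) + 1 < m), ybar j < ybar ⟨(j : ℕ) + 1, hj⟩ →
      ∑ i ∈ Finset.univ.filter (fun i => i ≤ j), (ybar i - y i) = 0 := by
    intro j hj hlt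
    by_contra h
    exact hIempty j hj ⟨h, hlt⟩
  -- residual sum over any downward-closed level region vanishes
  have hgen : ∀ (Q : ℝ → Prop), (∀ a b : ℝ, a ≤ b → Q b → Q a) →
      ∑ i ∈ Finset.univ.filter (fun i => Q (ybar i)), (ybar i - y i) = 0 := by
    intro Q hQ
    rcases eq_empty_or_nonempty (Finset.univ.filter (fun i => Q (ybar i))) with hA | hA
    · simp [hA]
    · set A := Finset.univ.filter (fun i => Q (ybar i)) with hAdef
      have hQmem : ∀ i, i ∈ A ↔ Q (ybar i) := by intro i; simp [hAdef]
      set b := A.max' hA with hb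
      have hbA : b ∈ A := A.max'_mem hA
      have hQb : Q (ybar b) := (hQmem b).1 hbA
      have hAeq : A = Finset.univ.filter (fun i => i ≤ b) := by
        ext i
        simp only [hQmem, mem_filter, mem_univ, true_and]
        constructor
        · intro hi; exact A.le_max' i ((hQmem i).2 hi)
        · intro hi; exact hQ _ _ (hmono hi) hQb
      by_cases hb1 : (b : ℕ) + 1 < m
      · have hnot : ¬ Q (ybar ⟨(b : ℕ) + 1, hb1⟩) := by
          intro hcon
          have hle : (⟨(b : ℕ) + 1, hb1⟩ : Fin m) ≤ b := A.le_max' _ ((hQmem _).2 hcon)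
          have : (b : ℕ) + 1 ≤ (b : ℕ) := hle
          omega
        have hlt : ybar b < ybar ⟨(b : ℕ) + 1, hb1⟩ := by
          by_contra hge
          push_neg at hge
          exact hnot (hQ _ _ hge hQb)
        rw [hAeq]
        exact key b hb1 hlt
      · have hu : A = Finset.univ := by
          rw [hAeq]
          ext i
          simp only [mem_filter, mem_univ, true_and, iff_true]
          have h1 := i.isLt
          have h2 := b.isLt
          show (i : ℕ) ≤ (b : ℕ)
          omega
        rw [hu]
        exact hsum
  have hL : ∀ v : ℝ, ∑ i ∈ Finset.univ.filter (fun i => ybar i ≤ v), (ybar i - y i) = 0 :=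
    fun v => hgen (fun t => t ≤ v) (fun a b hab h => hab.trans h)
  have hL' : ∀ v : ℝ, ∑ i ∈ Finset.univ.filter (fun i => ybar i < v), (ybar i - y i) = 0 :=
    fun v => hgen (fun t => t < v) (fun a b hab h => lt_of_le_of_lt hab h)
  -- level-set residual sums vanish
  have hblk : ∀ v : ℝ,
      ∑ i ∈ Finset.univ.filter (fun i => ybar i = v), (ybar i - y i) = 0 := by
    intro v
    have hsplit : (Finset.univ.filter (fun i => ybar i ≤ v)) =
        (Finset.univ.filter (fun i => ybar i < v)) ∪
        (Finset.univ.filter (fun i => ybar i = v)) := by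
      ext i
      simp only [mem_filter, mem_univ, true_and, mem_union]
      constructor
      · intro h
        rcases lt_or_eq_of_le h with h' | h'
        · exact Or.inl h'
        · exact Or.inr h'
      · rintro (h | h)
        · exact le_of_lt h
        · exact le_of_eq h
    have hdisj : Disjoint (Finset.univ.filter (fun i => ybar i < v))
        (Finset.univ.filter (fun i => ybar i = v)) := by
      rw [Finset.disjoint_left]
      intro a ha hb
      simp only [mem_filter, mem_univ, true_and] at ha hb
      rw [hb] at ha
      exact lt_irrefl _ ha
    have := Finset.sum_union (f := fun i => ybar i - y i) hdisj
    rw [← hsplit] at this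
    have h1 := hL v
    have h2 := hL' v
    rw [this, h2] at h1
    linarith
  -- part (2)
  have part2 : ∀ (j : Fin m) (h0 : 0 < (j : ℕ)) (hj : (j : ℕ) + 1 < m),
      ybar ⟨(j : ℕ) - 1, by omega⟩ < ybar j → ybar j < ybar ⟨(j : ℕ) + 1, hj⟩ →
      ybar j = y j := by
    intro j h0 hj hlt1 hlt2
    have hjm : (j : ℕ) - 1 < m := by omega
    set jm : Fin m := ⟨(j : ℕ) - 1, hjm⟩ with hjmdef
    have hjm1 : (jm : ℕ) + 1 < m := by simp [hjmdef]; omega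
    have hjeq : (⟨(jm : ℕ) + 1, hjm1⟩ : Fin m) = j := by
      apply Fin.ext
      simp [hjmdef]
      omega
    have hS1 : ∑ i ∈ Finset.univ.filter (fun i => i ≤ jm), (ybar i - y i) = 0 := by
      apply key jm hjm1
      rw [hjeq]
      exact hlt1
    have hS2 : ∑ i ∈ Finset.univ.filter (fun i => i ≤ j), (ybar i - y i) = 0 :=
      key j hj hlt2
    have hins : Finset.univ.filter (fun i => i ≤ j) =
        insert j (Finset.univ.filter (fun i => i ≤ jm)) := by
      ext i
      simp only [mem_filter, mem_univ, true_and, mem_insert]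
      constructor
      · intro h
        have h' : (i : ℕ) ≤ (j : ℕ) := h
        rcases eq_or_lt_of_le h' with h'' | h''
        · exact Or.inl (Fin.ext h'')
        · right
          show (i : ℕ) ≤ (jm : ℕ)
          simp [hjmdef]
          omega
      · rintro (rfl | h)
        · exact le_refl _
        · have h' : (i : ℕ) ≤ (jm : ℕ) := h
          show (i : ℕ) ≤ (j : ℕ)
          simp [hjmdef] at h'
          omega
    have hnotmem : j ∉ Finset.univ.filter (fun i => i ≤ jm) := by
      simp only [mem_filter, mem_univ, true_and]
      intro h
      have h' : (j : ℕ) ≤ (jm : ℕ) := h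
      simp [hjmdef] at h'
      omega
    rw [hins, Finset.sum_insert hnotmem, hS1, add_zero] at hS2
    linarith
  -- part (4)
  obtain ⟨i0, hi0⟩ := hnofit
  have hr0 : ybar i0 - y i0 ≠ 0 := sub_ne_zero_of_ne hi0
  have hmem : i0 ∈ Finset.univ.filter (fun i => ybar i = ybar i0) := by simp
  have hsum0 := hblk (ybar i0)
  have hadd := Finset.add_sum_erase _ (fun i => ybar i - y i) hmem
  have herase : ∑ i ∈ (Finset.univ.filter (fun i => ybar i = ybar i0)).erase i0,
      (ybar i - y i) = -(ybar i0 - y i0) := by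
    rw [hsum0] at hadd
    have hadd2 : ybar i0 - y i0 + ∑ i ∈ (Finset.univ.filter (fun i => ybar i = ybar i0)).erase i0,
        (ybar i - y i) = 0 := by simpa using hadd
    linarith
  have hne : ∑ i ∈ (Finset.univ.filter (fun i => ybar i = ybar i0)).erase i0,
      (ybar i - y i) ≠ 0 := by
    rw [herase]
    exact neg_ne_zero.mpr hr0
  have hex : ∃ j ∈ (Finset.univ.filter (fun i => ybar i = ybar i0)).erase i0,
      ybar j - y j ≠ 0 := by
    by_contra h
    push_neg at h
    exact hne (Finset.sum_eq_zero h)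
  obtain ⟨j, hjmem, hjne⟩ := hex
  have hjne' : j ≠ i0 := (Finset.mem_erase.1 hjmem).1
  have hjv : ybar j = ybar i0 := by
    have := (Finset.mem_erase.1 hjmem).2
    simpa using this
  have part4 : ∃ (v : ℝ) (i j : Fin m), i ≠ j ∧ ybar i = v ∧ ybar j = v ∧
      ybar i ≠ y i ∧ ybar j ≠ y j :=
    ⟨ybar i0, i0, j, hjne'.symm, rfl, hjv, hi0, fun h => hjne (sub_eq_zero_of_eq h)⟩
  refine ⟨⟨i0, j, hjne'.symm, hjv.symm⟩, part2, fun v _ => hblk v, part4⟩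
end

section
/- Let h: ℝ → ℝ, and suppose v₁, v₂, u₁, u₂ ∈ ℝ satisfy: u₁h(v₁) + u₂h(v₂) = 1/3; h is infinitely differentiable at v₁, v₂ with |h^{(n)}(v_i)| ≤ c^n n! for some c > 0; (u₁h'(v₁))² + u₁h''(v₁)/3 > 0; and (u₁h'(v₁)u₂h'(v₂))² < ((u₁h'(v₁))² + u₁h''(v₁)/3)((u₂h'(v₂))² + u₂h''(v₂)/3). Then for the dataset X = [[1,0,1/2],[0,1,1/2]], Y = [0,0,1], the parameters W₁ = [[v₁,v₁],[v₂,v₂]], b₁ = 0, W₂ = [u₁,u₂], b₂ = 0 form a local minimum of the squared-error risk ℓ with ℓ = 1/3. -/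
open Finset Matrix

section AuxiliaryLemmas
open Metric Set

lemma key_est (h : ℝ → ℝ) (v : ℝ) (hc : ContDiffAt ℝ (⊤ : ℕ∞) h v) {η : ℝ} (hη : 0 < η) :
    ∃ δ > (0:ℝ), ∀ α β : ℝ, |α - v| ≤ δ → |β - v| ≤ δ →
      |h α - h β - deriv h v * (α - β)| ≤ η * |α - β| ∧
      |h α + h β - 2 * h ((α + β) / 2) - iteratedDeriv 2 h v * ((α - β) / 2) ^ 2|
        ≤ η * ((α - β) / 2) ^ 2 := by
  obtain ⟨u, hu, hcd⟩ := hc.contDiffOn (m := 2) (by exact WithTop.coe_le_coe.mpr le_top) (by simp)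
  obtain ⟨δ₀, hδ₀, hball⟩ := Metric.mem_nhds_iff.mp hu
  set s := Metric.ball v δ₀ with hs_def
  have hs : IsOpen s := Metric.isOpen_ball
  have hcd' : ContDiffOn ℝ 2 h s := hcd.mono hball
  have hdiff0 : ∀ x ∈ s, HasDerivAt h (deriv h x) x := fun x hx =>
    ((hcd'.differentiableOn (by norm_num)).differentiableAt (hs.mem_nhds hx)).hasDerivAt
  have hg : ContDiffOn ℝ 1 (deriv h) s := hcd'.deriv_of_isOpen hs (by norm_num)
  have hgdiff0 : ∀ x ∈ s, HasDerivAt (deriv h) (deriv (deriv h) x) x := fun x hx =>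
    ((hg.differentiableOn (by norm_num)).differentiableAt (hs.mem_nhds hx)).hasDerivAt
  have hvs : v ∈ s := Metric.mem_ball_self hδ₀
  have hcont1 : ContinuousAt (deriv h) v := (hg.continuousOn.continuousAt (hs.mem_nhds hvs))
  have hcont2 : ContinuousAt (deriv (deriv h)) v :=
    ((hg.continuousOn_deriv_of_isOpen hs le_rfl).continuousAt (hs.mem_nhds hvs))
  obtain ⟨δa, hδa, ha⟩ := Metric.continuousAt_iff.mp hcont1 η hη
  obtain ⟨δb, hδb, hb⟩ := Metric.continuousAt_iff.mp hcont2 η hη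
  refine ⟨min (min δa δb) δ₀ / 2, by positivity, ?_⟩
  set δ := min (min δa δb) δ₀ / 2 with hδ_def
  have hδδ₀ : δ < δ₀ := by
    have : min (min δa δb) δ₀ ≤ δ₀ := min_le_right _ _
    simp only [hδ_def]; linarith
  have hmem : ∀ x : ℝ, |x - v| ≤ δ → x ∈ s := by
    intro x hx
    simp only [hs_def, Metric.mem_ball, Real.dist_eq]
    linarith [abs_nonneg (x - v)]
  have hdiff : ∀ x : ℝ, |x - v| ≤ δ → HasDerivAt h (deriv h x) x :=
    fun x hx => hdiff0 x (hmem x hx)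
  have hgdiff : ∀ x : ℝ, |x - v| ≤ δ → HasDerivAt (deriv h) (deriv (deriv h) x) x :=
    fun x hx => hgdiff0 x (hmem x hx)
  have hda : ∀ x : ℝ, |x - v| ≤ δ → |deriv h x - deriv h v| ≤ η := by
    intro x hx
    have h1 : δ < δa := by
      have h2 : min (min δa δb) δ₀ ≤ δa := le_trans (min_le_left _ _) (min_le_left _ _)
      have h3 : 0 < min (min δa δb) δ₀ := lt_min (lt_min hδa hδb) hδ₀
      simp only [hδ_def]; linarith
    have := ha (x := x) (by rw [Real.dist_eq]; linarith)
    rw [Real.dist_eq] at this; linarith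
  have hdb : ∀ x : ℝ, |x - v| ≤ δ → |deriv (deriv h) x - deriv (deriv h) v| ≤ η := by
    intro x hx
    have h1 : δ < δb := by
      have h2 : min (min δa δb) δ₀ ≤ δb := le_trans (min_le_left _ _) (min_le_right _ _)
      have h3 : 0 < min (min δa δb) δ₀ := lt_min (lt_min hδa hδb) hδ₀
      simp only [hδ_def]; linarith
    have := hb (x := x) (by rw [Real.dist_eq]; linarith)
    rw [Real.dist_eq] at this; linarith
  have hbet : ∀ a b x : ℝ, |a - v| ≤ δ → |b - v| ≤ δ → a ≤ x → x ≤ b → |x - v| ≤ δ := by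
    intro a b x hA hB h1 h2
    rw [abs_le] at *
    constructor <;> [linarith [hA.1]; linarith [hB.2]]
  have hi2 : iteratedDeriv 2 h v = deriv (deriv h) v := by
    rw [show (2:ℕ) = 1 + 1 from rfl, iteratedDeriv_succ, iteratedDeriv_one]
  -- helper 1
  have H1 : ∀ a b : ℝ, |a - v| ≤ δ → |b - v| ≤ δ → a < b →
      |h b - h a - deriv h v * (b - a)| ≤ η * |b - a| := by
    intro a b hA hB hab
    have hIcc : ∀ x ∈ Icc a b, |x - v| ≤ δ := fun x hx => hbet a b x hA hB hx.1 hx.2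
    have hcont : ContinuousOn h (Icc a b) := fun x hx =>
      (hdiff x (hIcc x hx)).continuousAt.continuousWithinAt
    obtain ⟨ξ, hξ, hslope⟩ := exists_hasDerivAt_eq_slope h (deriv h) hab hcont
      (fun x hx => hdiff x (hIcc x (Ioo_subset_Icc_self hx)))
    have hξδ : |ξ - v| ≤ δ := hIcc ξ (Ioo_subset_Icc_self hξ)
    have hba : b - a ≠ 0 := by linarith
    have heq : h b - h a = deriv h ξ * (b - a) := by
      field_simp at hslope; linarith [hslope]
    rw [heq]
    have : deriv h ξ * (b - a) - deriv h v * (b - a) = (deriv h ξ - deriv h v) * (b - a) := by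
      ring
    rw [this, abs_mul]
    exact mul_le_mul_of_nonneg_right (hda ξ hξδ) (abs_nonneg _)
  -- helper 2
  have H2 : ∀ a b : ℝ, |a - v| ≤ δ → |b - v| ≤ δ → a < b →
      |h a + h b - 2 * h ((a + b) / 2) - deriv (deriv h) v * ((b - a) / 2) ^ 2|
        ≤ η * ((b - a) / 2) ^ 2 := by
    intro a b hA hB hab
    have hIcc : ∀ x ∈ Icc a b, |x - v| ≤ δ := fun x hx => hbet a b x hA hB hx.1 hx.2
    set m := (a + b) / 2 with hm
    set d := (b - a) / 2 with hd
    have hdpos : 0 < d := by simp only [hd]; linarith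
    have hd2 : d ^ 2 ≠ 0 := by positivity
    set K := (h a + h b - 2 * h m) / d ^ 2 with hK
    have hmem2 : ∀ t ∈ Icc (0:ℝ) d, |m + t - v| ≤ δ ∧ |m - t - v| ≤ δ := by
      intro t ht
      constructor
      · exact hIcc _ ⟨by simp only [hm, hd] at *; linarith [ht.1],
          by simp only [hm, hd] at *; linarith [ht.2]⟩
      · exact hIcc _ ⟨by simp only [hm, hd] at *; linarith [ht.2],
          by simp only [hm, hd] at *; linarith [ht.1]⟩
    set G : ℝ → ℝ := fun t => h (m + t) + h (m - t) - 2 * h m - K * t ^ 2 with hG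
    have hG' : ∀ t ∈ Icc (0:ℝ) d,
        HasDerivAt G (deriv h (m + t) - deriv h (m - t) - 2 * K * t) t := by
      intro t ht
      have h1 : HasDerivAt (fun t : ℝ => h (m + t)) (deriv h (m + t) * 1) t :=
        (hdiff (m + t) (hmem2 t ht).1).comp t ((hasDerivAt_id t).const_add m)
      have h2 : HasDerivAt (fun t : ℝ => h (m - t)) (deriv h (m - t) * (-1)) t :=
        (hdiff (m - t) (hmem2 t ht).2).comp t ((hasDerivAt_id t).const_sub m)
      have h3 : HasDerivAt (fun t : ℝ => K * t ^ 2) (K * (2 * t ^ 1)) t :=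
        (hasDerivAt_pow 2 t).const_mul K
      have := ((h1.add h2).sub (hasDerivAt_const t (2 * h m))).sub h3
      exact this.congr_deriv (by ring)
    have hmdb : m + d = b := by simp only [hm, hd]; ring
    have hmda : m - d = a := by simp only [hm, hd]; ring
    have hG0 : G 0 = 0 := by simp [hG]; ring
    have hGd : G d = 0 := by
      simp only [hG, hmdb, hmda, hK]
      field_simp
      ring
    obtain ⟨t₁, ht₁, hroll⟩ := exists_hasDerivAt_eq_zero hdpos
      (fun t ht => (hG' t ht).continuousAt.continuousWithinAt) (hG0.trans hGd.symm)
      (fun t ht => hG' t (Ioo_subset_Icc_self ht))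
    have ht₁pos : 0 < t₁ := ht₁.1
    have hlt : m - t₁ < m + t₁ := by linarith
    have ht₁d : t₁ ≤ d := le_of_lt ht₁.2
    have hsub : ∀ x ∈ Icc (m - t₁) (m + t₁), |x - v| ≤ δ := by
      intro x hx
      have h1 := (hmem2 t₁ ⟨le_of_lt ht₁pos, ht₁d⟩).1
      have h2 := (hmem2 t₁ ⟨le_of_lt ht₁pos, ht₁d⟩).2
      exact hbet _ _ x h2 h1 hx.1 hx.2
    obtain ⟨ζ, hζ, hslope⟩ := exists_hasDerivAt_eq_slope (deriv h) (deriv (deriv h)) hlt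
      (fun x hx => (hgdiff x (hsub x hx)).continuousAt.continuousWithinAt)
      (fun x hx => hgdiff x (hsub x (Ioo_subset_Icc_self hx)))
    have hζδ : |ζ - v| ≤ δ := hsub ζ (Ioo_subset_Icc_self hζ)
    have hKζ : deriv (deriv h) ζ = K := by
      rw [hslope]
      have hnum : deriv h (m + t₁) - deriv h (m - t₁) = 2 * K * t₁ := by linarith [hroll]
      rw [hnum]
      field_simp [ht₁pos.ne']
      ring
    have hfin : h a + h b - 2 * h m = deriv (deriv h) ζ * d ^ 2 := by
      rw [hKζ, hK]; field_simp
    rw [hfin]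
    have : deriv (deriv h) ζ * d ^ 2 - deriv (deriv h) v * d ^ 2
        = (deriv (deriv h) ζ - deriv (deriv h) v) * d ^ 2 := by ring
    rw [this, abs_mul, abs_of_nonneg (sq_nonneg d)]
    exact mul_le_mul_of_nonneg_right (hdb ζ hζδ) (sq_nonneg d)
  -- now conclude
  intro α β hA hB
  rcases lt_trichotomy α β with hlt | heq | hgt
  · constructor
    · have := H1 α β hA hB hlt
      have e1 : h α - h β - deriv h v * (α - β) = -(h β - h α - deriv h v * (β - α)) := by ring
      rw [e1, abs_neg, abs_sub_comm α β]
      exact this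
    · have := H2 α β hA hB hlt
      have e1 : (α + β) / 2 = (α + β) / 2 := rfl
      have e2 : ((α - β) / 2) ^ 2 = ((β - α) / 2) ^ 2 := by ring
      have e3 : h α + h β - 2 * h ((α + β) / 2) - iteratedDeriv 2 h v * ((α - β) / 2) ^ 2
          = h α + h β - 2 * h ((α + β) / 2) - deriv (deriv h) v * ((β - α) / 2) ^ 2 := by
        rw [hi2, e2]
      rw [e3, e2]
      exact this
  · subst heq
    constructor
    · simp
    · have e1 : (α + α) / 2 = α := by ring
      rw [e1]
      have e2 : h α + h α - 2 * h α - iteratedDeriv 2 h v * ((α - α) / 2) ^ 2 = 0 := by ring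
      rw [e2, abs_zero]
      positivity
  · constructor
    · exact H1 β α hB hA hgt
    · have := H2 β α hB hA hgt
      have e3 : h α + h β - 2 * h ((α + β) / 2) - iteratedDeriv 2 h v * ((α - β) / 2) ^ 2
          = h β + h α - 2 * h ((β + α) / 2) - deriv (deriv h) v * ((α - β) / 2) ^ 2 := by
        rw [hi2]; ring_nf
      rw [e3]
      exact this

lemma unit_est (h : ℝ → ℝ) (a q κ : ℝ) (α β : ℝ) (hκ : 0 ≤ κ)
    (hest1 : |h α - h β - a * (α - β)| ≤ κ * |α - β|)
    (hest2 : |h α + h β - 2 * h ((α + β) / 2) - q * ((α - β) / 2) ^ 2|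
      ≤ κ * ((α - β) / 2) ^ 2) :
    ∃ e f : ℝ, |e| ≤ κ ∧ |f| ≤ κ ∧
      h α - h β = 2 * ((α - β) / 2) * (a + e) ∧
      h α + h β - 2 * h ((α + β) / 2) = ((α - β) / 2) ^ 2 * (q + f) := by
  by_cases hd : α = β
  · refine ⟨0, 0, by simpa using hκ, by simpa using hκ, ?_, ?_⟩
    · subst hd; ring
    · subst hd
      have e1 : (α + α) / 2 = α := by ring
      rw [e1]; ring
  · have hab : α - β ≠ 0 := sub_ne_zero.mpr hd
    have hab2 : ((α - β) / 2) ^ 2 ≠ 0 := by positivity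
    refine ⟨(h α - h β) / (α - β) - a, (h α + h β - 2 * h ((α + β) / 2)) / ((α - β) / 2) ^ 2 - q,
      ?_, ?_, by field_simp; ring, by field_simp; ring⟩
    · have e1 : (h α - h β) / (α - β) - a = (h α - h β - a * (α - β)) / (α - β) := by
        field_simp
      rw [e1, abs_div]
      rw [div_le_iff₀ (abs_pos.mpr hab)]
      exact hest1
    · have e1 : (h α + h β - 2 * h ((α + β) / 2)) / ((α - β) / 2) ^ 2 - q
          = (h α + h β - 2 * h ((α + β) / 2) - q * ((α - β) / 2) ^ 2) / ((α - β) / 2) ^ 2 := by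
        field_simp
      rw [e1, abs_div]
      rw [div_le_iff₀ (abs_pos.mpr hab2)]
      calc |h α + h β - 2 * h ((α + β) / 2) - q * ((α - β) / 2) ^ 2|
          ≤ κ * ((α - β) / 2) ^ 2 := hest2
        _ = κ * |((α - β) / 2) ^ 2| := by rw [abs_of_nonneg (sq_nonneg _)]

lemma quad_nonneg (A B C d₁ d₂ : ℝ) (hA : 0 < A) (hD : 0 < A * C - B ^ 2) :
    0 ≤ A * d₁ ^ 2 + 2 * B * d₁ * d₂ + C * d₂ ^ 2 := by
  nlinarith [sq_nonneg (A * d₁ + B * d₂), mul_nonneg hD.le (sq_nonneg d₂), hA]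

lemma pd_open (a₁ a₂ q₁ q₂ u₁ u₂ : ℝ)
    (h6 : 0 < (u₁ * a₁) ^ 2 + u₁ * q₁ / 3)
    (h7 : (u₁ * a₁ * (u₂ * a₂)) ^ 2 <
      ((u₁ * a₁) ^ 2 + u₁ * q₁ / 3) * ((u₂ * a₂) ^ 2 + u₂ * q₂ / 3)) :
    ∃ κ > (0:ℝ), ∀ w₁ w₂ e₁ e₂ f₁ f₂ : ℝ,
      |w₁ - u₁| ≤ κ → |w₂ - u₂| ≤ κ → |e₁| ≤ κ → |e₂| ≤ κ → |f₁| ≤ κ → |f₂| ≤ κ →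
      ∀ d₁ d₂ : ℝ,
        0 ≤ (w₁ * (a₁ + e₁) * d₁ + w₂ * (a₂ + e₂) * d₂) ^ 2
          + w₁ * (q₁ + f₁) / 3 * d₁ ^ 2 + w₂ * (q₂ + f₂) / 3 * d₂ ^ 2 := by
  set F : (Fin 6 → ℝ) → ℝ := fun z =>
    min ((z 0 * (a₁ + z 2)) ^ 2 + z 0 * (q₁ + z 4) / 3)
      (((z 0 * (a₁ + z 2)) ^ 2 + z 0 * (q₁ + z 4) / 3) *
        ((z 1 * (a₂ + z 3)) ^ 2 + z 1 * (q₂ + z 5) / 3)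
        - (z 0 * (a₁ + z 2) * (z 1 * (a₂ + z 3))) ^ 2) with hF_def
  have hFc : Continuous F := by
    apply Continuous.min <;> fun_prop
  set p₀ : Fin 6 → ℝ := ![u₁, u₂, 0, 0, 0, 0] with hp₀
  have hFpos : 0 < F p₀ := by
    have e0 : p₀ 0 = u₁ := rfl
    have e1 : p₀ 1 = u₂ := rfl
    have e2 : p₀ 2 = 0 := rfl
    have e3 : p₀ 3 = 0 := rfl
    have e4 : p₀ 4 = 0 := rfl
    have e5 : p₀ 5 = 0 := rfl
    simp only [hF_def, e0, e1, e2, e3, e4, e5, add_zero]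
    exact lt_min h6 (by linarith)
  have hnhds : F ⁻¹' Set.Ioi 0 ∈ nhds p₀ :=
    hFc.continuousAt.preimage_mem_nhds (Ioi_mem_nhds hFpos)
  obtain ⟨ρ, hρ, hsub⟩ := Metric.mem_nhds_iff.mp hnhds
  refine ⟨ρ / 2, by positivity, ?_⟩
  intro w₁ w₂ e₁ e₂ f₁ f₂ hw₁ hw₂ he₁ he₂ hf₁ hf₂ d₁ d₂
  set z : Fin 6 → ℝ := ![w₁, w₂, e₁, e₂, f₁, f₂] with hz
  have hdist : dist z p₀ ≤ ρ / 2 := by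
    rw [dist_pi_le_iff (by positivity)]
    intro i
    fin_cases i
    · show dist w₁ u₁ ≤ ρ / 2
      rw [Real.dist_eq]; exact hw₁
    · show dist w₂ u₂ ≤ ρ / 2
      rw [Real.dist_eq]; exact hw₂
    · show dist e₁ 0 ≤ ρ / 2
      rw [Real.dist_eq, sub_zero]; exact he₁
    · show dist e₂ 0 ≤ ρ / 2
      rw [Real.dist_eq, sub_zero]; exact he₂
    · show dist f₁ 0 ≤ ρ / 2
      rw [Real.dist_eq, sub_zero]; exact hf₁
    · show dist f₂ 0 ≤ ρ / 2
      rw [Real.dist_eq, sub_zero]; exact hf₂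
  have hzmem : z ∈ Metric.ball p₀ ρ := by
    rw [Metric.mem_ball]
    linarith
  have hFz : 0 < F z := hsub hzmem
  have z0 : z 0 = w₁ := rfl
  have z1 : z 1 = w₂ := rfl
  have z2 : z 2 = e₁ := rfl
  have z3 : z 3 = e₂ := rfl
  have z4 : z 4 = f₁ := rfl
  have z5 : z 5 = f₂ := rfl
  rw [hF_def] at hFz
  simp only [z0, z1, z2, z3, z4, z5, lt_min_iff] at hFz
  obtain ⟨hA, hD⟩ := hFz
  have hD' : 0 < ((w₁ * (a₁ + e₁)) ^ 2 + w₁ * (q₁ + f₁) / 3)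
      * ((w₂ * (a₂ + e₂)) ^ 2 + w₂ * (q₂ + f₂) / 3)
      - (w₁ * (a₁ + e₁) * (w₂ * (a₂ + e₂))) ^ 2 := by nlinarith [hD]
  have heq : (w₁ * (a₁ + e₁) * d₁ + w₂ * (a₂ + e₂) * d₂) ^ 2
        + w₁ * (q₁ + f₁) / 3 * d₁ ^ 2 + w₂ * (q₂ + f₂) / 3 * d₂ ^ 2
      = ((w₁ * (a₁ + e₁)) ^ 2 + w₁ * (q₁ + f₁) / 3) * d₁ ^ 2
        + 2 * (w₁ * (a₁ + e₁) * (w₂ * (a₂ + e₂))) * d₁ * d₂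
        + ((w₂ * (a₂ + e₂)) ^ 2 + w₂ * (q₂ + f₂) / 3) * d₂ ^ 2 := by ring
  rw [heq]
  exact quad_nonneg _ _ _ _ _ hA hD'
lemma final_ineq (p q r : ℝ) (hT : 0 ≤ 1/4 * (p - q) ^ 2 + 1/3 * (p + q - 2 * r)) :
    (1:ℝ)/3 ≤ 1/2 * (p ^ 2 + q ^ 2 + (r - 1) ^ 2) := by
  nlinarith [hT, sq_nonneg (p + q - 2/3), sq_nonneg (r - 1/3)]

end AuxiliaryLemmas

set_option maxHeartbeats 1000000 in
/-- Theorem 2, Part 2: under conditions (C2.3)–(C2.7), the constructed parameters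
are a local minimum of the empirical risk with value `1/3`. -/
theorem stmt11 (h : ℝ → ℝ) (v₁ v₂ u₁ u₂ : ℝ)
    (hC3 : u₁ * h v₁ + u₂ * h v₂ = 1 / 3)
    (hC4 : ContDiffAt ℝ (⊤ : ℕ∞) h v₁ ∧ ContDiffAt ℝ (⊤ : ℕ∞) h v₂)
    (hC5 : ∃ c > (0 : ℝ), ∀ n : ℕ,
      |iteratedDeriv n h v₁| ≤ c ^ n * n.factorial ∧
      |iteratedDeriv n h v₂| ≤ c ^ n * n.factorial)
    (hC6 : 0 < (u₁ * deriv h v₁) ^ 2 + u₁ * iteratedDeriv 2 h v₁ / 3)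
    (hC7 : (u₁ * deriv h v₁ * (u₂ * deriv h v₂)) ^ 2 <
      ((u₁ * deriv h v₁) ^ 2 + u₁ * iteratedDeriv 2 h v₁ / 3) *
      ((u₂ * deriv h v₂) ^ 2 + u₂ * iteratedDeriv 2 h v₂ / 3)) :
    let X : Matrix (Fin 2) (Fin 3) ℝ := !![1, 0, 1/2; 0, 1, 1/2]
    let Y : Matrix (Fin 1) (Fin 3) ℝ := !![0, 0, 1]
    let L : Matrix (Fin 2) (Fin 2) ℝ → (Fin 2 → ℝ) → Matrix (Fin 1) (Fin 2) ℝ → ℝ → ℝ :=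
      fun W1 b1 W2 b2 =>
        (1 / 2 : ℝ) * ∑ k,
          ((∑ j, W2 0 j * h ((W1 * X) j k + b1 j)) + b2 - Y 0 k) ^ 2
    let W1h : Matrix (Fin 2) (Fin 2) ℝ := !![v₁, v₁; v₂, v₂]
    let W2h : Matrix (Fin 1) (Fin 2) ℝ := !![u₁, u₂]
    L W1h 0 W2h 0 = 1 / 3 ∧
    ∃ ε > (0 : ℝ), ∀ (W1 : Matrix (Fin 2) (Fin 2) ℝ) (b1 : Fin 2 → ℝ)
      (W2 : Matrix (Fin 1) (Fin 2) ℝ) (b2 : ℝ),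
      (∀ i j, |W1 i j - W1h i j| ≤ ε) → (∀ j, |b1 j| ≤ ε) →
      (∀ j, |W2 0 j - W2h 0 j| ≤ ε) → |b2| ≤ ε →
      L W1h 0 W2h 0 ≤ L W1 b1 W2 b2 := by
  obtain ⟨hc1, hc2⟩ := hC4
  intro X Y L W1h W2h
  have hLval : ∀ (W1 : Matrix (Fin 2) (Fin 2) ℝ) (b1 : Fin 2 → ℝ)
      (W2 : Matrix (Fin 1) (Fin 2) ℝ) (b2 : ℝ),
      L W1 b1 W2 b2 = (1/2 : ℝ) *
        ((W2 0 0 * h (W1 0 0 + b1 0) + W2 0 1 * h (W1 1 0 + b1 1) + b2) ^ 2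
        + (W2 0 0 * h (W1 0 1 + b1 0) + W2 0 1 * h (W1 1 1 + b1 1) + b2) ^ 2
        + (W2 0 0 * h (((W1 0 0 + b1 0) + (W1 0 1 + b1 0)) / 2)
           + W2 0 1 * h (((W1 1 0 + b1 1) + (W1 1 1 + b1 1)) / 2) + b2 - 1) ^ 2) := by
    intro W1 b1 W2 b2
    simp [L, X, Y, Matrix.mul_apply, Fin.sum_univ_two, Fin.sum_univ_three]
    ring_nf
  -- part 1
  have hW1h00 : W1h 0 0 = v₁ := by simp [W1h]
  have hW1h01 : W1h 0 1 = v₁ := by simp [W1h]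
  have hW1h10 : W1h 1 0 = v₂ := by simp [W1h]
  have hW1h11 : W1h 1 1 = v₂ := by simp [W1h]
  have hW2h0 : W2h 0 0 = u₁ := by simp [W2h]
  have hW2h1 : W2h 0 1 = u₂ := by simp [W2h]
  have hL0 : L W1h 0 W2h 0 = 1 / 3 := by
    rw [hLval, hW1h00, hW1h01, hW1h10, hW1h11, hW2h0, hW2h1]
    simp only [Pi.zero_apply, add_zero]
    rw [show (v₁ + v₁) / 2 = v₁ from by ring, show (v₂ + v₂) / 2 = v₂ from by ring]
    linear_combination (3/2 * (u₁ * h v₁ + u₂ * h v₂) - 1/2) * hC3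
  refine ⟨hL0, ?_⟩
  -- part 2
  obtain ⟨κ, hκpos, hPD⟩ := pd_open (deriv h v₁) (deriv h v₂)
    (iteratedDeriv 2 h v₁) (iteratedDeriv 2 h v₂) u₁ u₂ hC6 hC7
  obtain ⟨δ₁, hδ₁pos, hE1⟩ := key_est h v₁ hc1 hκpos
  obtain ⟨δ₂, hδ₂pos, hE2⟩ := key_est h v₂ hc2 hκpos
  refine ⟨min κ (min δ₁ δ₂ / 2), by positivity, ?_⟩
  intro W1 b1 W2 b2 hW1 hb1 hW2 hb2
  set ε := min κ (min δ₁ δ₂ / 2) with hε_def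
  have hεκ : ε ≤ κ := min_le_left _ _
  have hεδ : ε ≤ min δ₁ δ₂ / 2 := min_le_right _ _
  have hεδ₁ : 2 * ε ≤ δ₁ := by
    have := min_le_left δ₁ δ₂; linarith
  have hεδ₂ : 2 * ε ≤ δ₂ := by
    have := min_le_right δ₁ δ₂; linarith
  rw [hL0, hLval]
  -- entry bounds
  have hW100 : |W1 0 0 - v₁| ≤ ε := by have := hW1 0 0; rwa [hW1h00] at this
  have hW101 : |W1 0 1 - v₁| ≤ ε := by have := hW1 0 1; rwa [hW1h01] at this
  have hW110 : |W1 1 0 - v₂| ≤ ε := by have := hW1 1 0; rwa [hW1h10] at this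
  have hW111 : |W1 1 1 - v₂| ≤ ε := by have := hW1 1 1; rwa [hW1h11] at this
  have hw1 : |W2 0 0 - u₁| ≤ ε := by have := hW2 0; rwa [hW2h0] at this
  have hw2 : |W2 0 1 - u₂| ≤ ε := by have := hW2 1; rwa [hW2h1] at this
  set α₁ := W1 0 0 + b1 0 with hα₁def
  set β₁ := W1 0 1 + b1 0 with hβ₁def
  set α₂ := W1 1 0 + b1 1 with hα₂def
  set β₂ := W1 1 1 + b1 1 with hβ₂def
  have hα₁ : |α₁ - v₁| ≤ δ₁ := by
    have e : α₁ - v₁ = (W1 0 0 - v₁) + b1 0 := by rw [hα₁def]; ring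
    rw [e]
    calc |(W1 0 0 - v₁) + b1 0| ≤ |W1 0 0 - v₁| + |b1 0| := abs_add_le _ _
      _ ≤ δ₁ := by linarith [hb1 0]
  have hβ₁ : |β₁ - v₁| ≤ δ₁ := by
    have e : β₁ - v₁ = (W1 0 1 - v₁) + b1 0 := by rw [hβ₁def]; ring
    rw [e]
    calc |(W1 0 1 - v₁) + b1 0| ≤ |W1 0 1 - v₁| + |b1 0| := abs_add_le _ _
      _ ≤ δ₁ := by linarith [hb1 0]
  have hα₂ : |α₂ - v₂| ≤ δ₂ := by
    have e : α₂ - v₂ = (W1 1 0 - v₂) + b1 1 := by rw [hα₂def]; ring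
    rw [e]
    calc |(W1 1 0 - v₂) + b1 1| ≤ |W1 1 0 - v₂| + |b1 1| := abs_add_le _ _
      _ ≤ δ₂ := by linarith [hb1 1]
  have hβ₂ : |β₂ - v₂| ≤ δ₂ := by
    have e : β₂ - v₂ = (W1 1 1 - v₂) + b1 1 := by rw [hβ₂def]; ring
    rw [e]
    calc |(W1 1 1 - v₂) + b1 1| ≤ |W1 1 1 - v₂| + |b1 1| := abs_add_le _ _
      _ ≤ δ₂ := by linarith [hb1 1]
  obtain ⟨hest11, hest12⟩ := hE1 α₁ β₁ hα₁ hβ₁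
  obtain ⟨hest21, hest22⟩ := hE2 α₂ β₂ hα₂ hβ₂
  obtain ⟨e₁, f₁, he₁, hf₁, hΔ₁, hD₁⟩ :=
    unit_est h (deriv h v₁) (iteratedDeriv 2 h v₁) κ α₁ β₁ hκpos.le hest11 hest12
  obtain ⟨e₂, f₂, he₂, hf₂, hΔ₂, hD₂⟩ :=
    unit_est h (deriv h v₂) (iteratedDeriv 2 h v₂) κ α₂ β₂ hκpos.le hest21 hest22
  have hPDa := hPD (W2 0 0) (W2 0 1) e₁ e₂ f₁ f₂
    (le_trans hw1 hεκ) (le_trans hw2 hεκ) he₁ he₂ hf₁ hf₂ ((α₁ - β₁)/2) ((α₂ - β₂)/2)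
  -- the three network outputs
  set p := W2 0 0 * h α₁ + W2 0 1 * h α₂ + b2 with hp
  set q := W2 0 0 * h β₁ + W2 0 1 * h β₂ + b2 with hq
  set r := W2 0 0 * h ((α₁ + β₁) / 2) + W2 0 1 * h ((α₂ + β₂) / 2) + b2 with hr
  have h1 : (1/4 : ℝ) * (p - q) ^ 2
      = (W2 0 0 * (deriv h v₁ + e₁) * ((α₁ - β₁)/2)
         + W2 0 1 * (deriv h v₂ + e₂) * ((α₂ - β₂)/2)) ^ 2 := by
    have hpq : p - q = 2 * (W2 0 0 * (deriv h v₁ + e₁) * ((α₁ - β₁)/2)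
        + W2 0 1 * (deriv h v₂ + e₂) * ((α₂ - β₂)/2)) := by
      rw [hp, hq]
      linear_combination (W2 0 0) * hΔ₁ + (W2 0 1) * hΔ₂
    rw [hpq]; ring
  have h2 : (1/3 : ℝ) * (p + q - 2 * r)
      = W2 0 0 * (iteratedDeriv 2 h v₁ + f₁) / 3 * ((α₁ - β₁)/2) ^ 2
        + W2 0 1 * (iteratedDeriv 2 h v₂ + f₂) / 3 * ((α₂ - β₂)/2) ^ 2 := by
    rw [hp, hq, hr]
    linear_combination (W2 0 0 / 3) * hD₁ + (W2 0 1 / 3) * hD₂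
  have hT : 0 ≤ (1/4 : ℝ) * (p - q) ^ 2 + (1/3 : ℝ) * (p + q - 2 * r) := by
    rw [h1, h2]
    linarith [hPDa]
  -- final
  clear_value p q r
  exact final_ineq p q r hT
end

section
/- Let h(x) = s₊max(x,0) + s₋min(x,0) with s₊ > 0, s₋ ≥ 0. For X = [[1,0,1/2],[0,1,1/2]], Y = [0,0,1], set v₁ = v₂ = 1/(4s₊), u₁ = u₂ = 2/3, W₁ = [[v₁,v₁],[v₂,v₂]], b₁ = 0, W₂ = [u₁,u₂], b₂ = 0. Then for all sufficiently small perturbations of all parameters, the perturbed risk is ≥ 1/3, i.e., this point is a local minimum of ℓ with value ℓ = 1/3. -/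
open Finset Matrix

lemma key_ineq (a b : ℝ) : (1:ℝ)/3 ≤ 1/2 * (a^2 + b^2 + ((a+b)/2 - 1)^2) := by
  nlinarith [sq_nonneg (a + b - 2/3), sq_nonneg (a - b)]

/-- For ReLU-like activations, the constructed point is a local minimum of the
empirical risk on the counterexample dataset, with risk value `1/3`. -/
theorem stmt13 (sp sm : ℝ) (hsp : 0 < sp) (hsm : 0 ≤ sm) :
    let h : ℝ → ℝ := fun x => sp * max x 0 + sm * min x 0
    let X : Matrix (Fin 2) (Fin 3) ℝ := !![1, 0, 1/2; 0, 1, 1/2]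
    let Y : Matrix (Fin 1) (Fin 3) ℝ := !![0, 0, 1]
    let v : ℝ := 1 / (4 * sp)
    let u : ℝ := 2 / 3
    let L : Matrix (Fin 2) (Fin 2) ℝ → (Fin 2 → ℝ) → Matrix (Fin 1) (Fin 2) ℝ → ℝ → ℝ :=
      fun W1 b1 W2 b2 =>
        (1 / 2 : ℝ) * ∑ k,
          ((∑ j, W2 0 j * h ((W1 * X) j k + b1 j)) + b2 - Y 0 k) ^ 2
    let W1h : Matrix (Fin 2) (Fin 2) ℝ := !![v, v; v, v]
    let W2h : Matrix (Fin 1) (Fin 2) ℝ := !![u, u]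
    L W1h 0 W2h 0 = 1 / 3 ∧
    ∃ ε > (0 : ℝ), ∀ (W1 : Matrix (Fin 2) (Fin 2) ℝ) (b1 : Fin 2 → ℝ)
      (W2 : Matrix (Fin 1) (Fin 2) ℝ) (b2 : ℝ),
      (∀ i j, |W1 i j - W1h i j| ≤ ε) → (∀ j, |b1 j| ≤ ε) →
      (∀ j, |W2 0 j - W2h 0 j| ≤ ε) → |b2| ≤ ε →
      L W1h 0 W2h 0 ≤ L W1 b1 W2 b2 := by
  intro h X Y v u L W1h W2h
  have hsp' : sp ≠ 0 := ne_of_gt hsp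
  have hv : 0 < v := by
    have : 0 < 4 * sp := by linarith
    exact div_pos one_pos this
  have hh : ∀ z : ℝ, 0 < z → h z = sp * z := by
    intro z hz
    show sp * max z 0 + sm * min z 0 = sp * z
    rw [max_eq_left hz.le, min_eq_right hz.le]
    ring
  have hval : L W1h 0 W2h 0 = 1 / 3 := by
    show (1 / 2 : ℝ) * ∑ k,
        ((∑ j, W2h 0 j * h ((W1h * X) j k + (0 : Fin 2 → ℝ) j)) + 0 - Y 0 k) ^ 2 = 1/3
    have hq : ∀ (j : Fin 2) (k : Fin 3), (W1h * X) j k + (0 : Fin 2 → ℝ) j = v := by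
      intro j k
      fin_cases j <;> fin_cases k <;>
        simp [Matrix.mul_apply, Fin.sum_univ_succ, W1h, X] <;> ring
    have hhv : h v = 1/4 := by
      rw [hh v hv]; show sp * (1 / (4 * sp)) = 1/4; rw [mul_one_div, div_eq_iff (by positivity)]; ring
    simp only [hq, hhv, Fin.sum_univ_succ, Fin.sum_univ_zero]
    norm_num [W2h, Y, u, show (![0, 0, 1] : Fin 3 → ℝ) 2 = 1 from rfl]
  refine ⟨hval, v/4, by positivity, ?_⟩
  intro W1 b1 W2 b2 hW1 hb1 hW2 hb2
  rw [hval]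
  -- positivity of preactivations
  have pos : ∀ (j : Fin 2) (k : Fin 3), 0 < (W1 * X) j k + b1 j := by
    intro j k
    have h0 := abs_le.mp (hW1 j 0)
    have h1 := abs_le.mp (hW1 j 1)
    have hb := abs_le.mp (hb1 j)
    have e0 : W1h j 0 = v := by fin_cases j <;> simp [W1h]
    have e1 : W1h j 1 = v := by fin_cases j <;> simp [W1h]
    rw [e0] at h0; rw [e1] at h1
    fin_cases k <;>
      simp [Matrix.mul_apply, Fin.sum_univ_succ, X] <;> nlinarith
  show (1:ℝ)/3 ≤ (1 / 2 : ℝ) * ∑ k,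
      ((∑ j, W2 0 j * h ((W1 * X) j k + b1 j)) + b2 - Y 0 k) ^ 2
  have hrw : ∀ (j : Fin 2) (k : Fin 3),
      h ((W1 * X) j k + b1 j) = sp * ((W1 * X) j k + b1 j) := fun j k => hh _ (pos j k)
  simp only [hrw, Fin.sum_univ_two, Fin.sum_univ_three]
  have m00 : (W1 * X) 0 0 = W1 0 0 := by simp [Matrix.mul_apply, Fin.sum_univ_succ, X]
  have m01 : (W1 * X) 0 1 = W1 0 1 := by simp [Matrix.mul_apply, Fin.sum_univ_succ, X]
  have m02 : (W1 * X) 0 2 = (W1 0 0 + W1 0 1) / 2 := by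
    simp [Matrix.mul_apply, Fin.sum_univ_succ, X]; ring
  have m10 : (W1 * X) 1 0 = W1 1 0 := by simp [Matrix.mul_apply, Fin.sum_univ_succ, X]
  have m11 : (W1 * X) 1 1 = W1 1 1 := by simp [Matrix.mul_apply, Fin.sum_univ_succ, X]
  have m12 : (W1 * X) 1 2 = (W1 1 0 + W1 1 1) / 2 := by
    simp [Matrix.mul_apply, Fin.sum_univ_succ, X]; ring
  rw [m00, m01, m02, m10, m11, m12]
  set a : ℝ := W2 0 0 * (sp * (W1 0 0 + b1 0)) + W2 0 1 * (sp * (W1 1 0 + b1 1)) + b2 with ha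
  set b : ℝ := W2 0 0 * (sp * (W1 0 1 + b1 0)) + W2 0 1 * (sp * (W1 1 1 + b1 1)) + b2 with hb
  have : (1 / 2 : ℝ) *
      ((W2 0 0 * (sp * (W1 0 0 + b1 0)) + W2 0 1 * (sp * (W1 1 0 + b1 1)) + b2 - Y 0 0) ^ 2 +
       (W2 0 0 * (sp * (W1 0 1 + b1 0)) + W2 0 1 * (sp * (W1 1 1 + b1 1)) + b2 - Y 0 1) ^ 2 +
       (W2 0 0 * (sp * ((W1 0 0 + W1 0 1) / 2 + b1 0)) + W2 0 1 * (sp * ((W1 1 0 + W1 1 1) / 2 + b1 1)) + b2 - Y 0 2) ^ 2)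
      = 1/2 * (a^2 + b^2 + ((a+b)/2 - 1)^2) := by
    simp only [ha, hb]
    norm_num [Y, show (![0, 0, 1] : Fin 3 → ℝ) 2 = 1 from rfl]
    ring
  rw [this]
  exact key_ineq a b
end

section
/- Let ℓ((W_j)) = ℓ₀(W_{H+1:1}) with d_j ≥ min{d_x,d_y} for hidden layers and ℓ₀ differentiable. If ∇ℓ₀(Ŵ_{H+1:1}) = 0, then (Ŵ_j)_{j=1}^{H+1} is a global minimum of ℓ if and only if Ŵ_{H+1:1} is a global minimum of ℓ₀; similarly for global maxima. -/
open Matrix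

attribute [local instance] Matrix.frobeniusNormedAddCommGroup Matrix.frobeniusNormedSpace

/-- `segProd d W a b` is the matrix product `W (b-1) * ⋯ * W a`
(the identity when `a = b`, junk when `b < a`). -/
noncomputable def segProd (d : ℕ → ℕ)
    (W : ∀ j : ℕ, Matrix (Fin (d (j + 1))) (Fin (d j)) ℝ) (a : ℕ) :
    (b : ℕ) → Matrix (Fin (d b)) (Fin (d a)) ℝ
  | 0 => if h : a = 0 then by subst h; exact 1 else 0
  | b + 1 => if h : a = b + 1 then by subst h; exact 1 else W b * segProd d W a b

/-- The `n × m` "pseudo-identity" matrix. -/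
def Jmat (n m : ℕ) : Matrix (Fin n) (Fin m) ℝ :=
  fun i k => if (i : ℕ) = (k : ℕ) then 1 else 0

lemma Jmul {n m p : ℕ} (h : min n p ≤ m) : Jmat n m * Jmat m p = Jmat n p := by
  ext i k
  simp only [Matrix.mul_apply, Jmat]
  by_cases hik : (i : ℕ) = (k : ℕ)
  · have him : (i : ℕ) < m := lt_of_lt_of_le (lt_min i.2 (hik ▸ k.2)) h
    rw [Finset.sum_eq_single (⟨(i : ℕ), him⟩ : Fin m)]
    · simp [hik]
    · intro j _ hj
      have : (i : ℕ) ≠ (j : ℕ) := fun he => hj (Fin.ext he.symm)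
      simp [this]
    · simp
  · rw [Finset.sum_eq_zero, if_neg hik]
    intro j _
    by_cases h1 : (i : ℕ) = (j : ℕ)
    · have : ¬ ((j : ℕ) = (k : ℕ)) := fun he => hik (h1.trans he)
      simp [this]
    · simp [h1]

lemma Jmat_self (n : ℕ) : Jmat n n = 1 := by
  ext i k
  simp [Jmat, Matrix.one_apply, Fin.ext_iff, eq_comm]

lemma segProd_zero (d : ℕ → ℕ) (W : ∀ j : ℕ, Matrix (Fin (d (j + 1))) (Fin (d j)) ℝ) :
    segProd d W 0 0 = 1 := by simp [segProd]

lemma segProd_succ (d : ℕ → ℕ) (W : ∀ j : ℕ, Matrix (Fin (d (j + 1))) (Fin (d j)) ℝ)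
    (b : ℕ) : segProd d W 0 (b + 1) = W b * segProd d W 0 b := by
  simp [segProd]

lemma segProd_surj (H : ℕ) (d : ℕ → ℕ)
    (hwidth : ∀ j, 1 ≤ j → j ≤ H → min (d 0) (d (H + 1)) ≤ d j)
    (R : Matrix (Fin (d (H + 1))) (Fin (d 0)) ℝ) :
    ∃ W' : ∀ j : ℕ, Matrix (Fin (d (j + 1))) (Fin (d j)) ℝ,
      segProd d W' 0 (H + 1) = R := by
  cases H with
  | zero =>
    refine ⟨fun j => match j with | 0 => R | (j + 1) => 0, ?_⟩
    rw [segProd_succ, segProd_zero, Matrix.mul_one]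
  | succ H' =>
    set m := min (d 0) (d (H' + 1 + 1)) with hm
    -- factor R = C * D
    obtain ⟨C, D, hCD⟩ : ∃ (C : Matrix (Fin (d (H' + 1 + 1))) (Fin m) ℝ)
        (D : Matrix (Fin m) (Fin (d 0)) ℝ), C * D = R := by
      rcases le_total (d 0) (d (H' + 1 + 1)) with hle | hle
      · refine ⟨R * Jmat (d 0) m, Jmat m (d 0), ?_⟩
        rw [Matrix.mul_assoc, Jmul (by simp [hm, hle]), Jmat_self, Matrix.mul_one]
      · refine ⟨Jmat (d (H' + 1 + 1)) m, Jmat m (d (H' + 1 + 1)) * R, ?_⟩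
        rw [← Matrix.mul_assoc, Jmul (by simp [hm, hle]), Jmat_self, Matrix.one_mul]
    set W' : ∀ j : ℕ, Matrix (Fin (d (j + 1))) (Fin (d j)) ℝ := fun j =>
      if h : j = H' + 1 then cast (by rw [h]) (C * Jmat m (d (H' + 1)))
      else if h0 : j = 0 then cast (by rw [h0]) (Jmat (d 1) m * D)
      else Jmat (d (j + 1)) m * Jmat m (d j) with hW'
    have hW0 : W' 0 = Jmat (d 1) m * D := by
      simp only [hW']
      rw [dif_neg (by omega : ¬ (0 : ℕ) = H' + 1)]
      rw [dif_pos trivial, cast_eq]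
    have hWH : W' (H' + 1) = C * Jmat m (d (H' + 1)) := by
      simp only [hW']
      rw [dif_pos trivial, cast_eq]
    have hWmid : ∀ b, 1 ≤ b → b ≤ H' → W' b = Jmat (d (b + 1)) m * Jmat m (d b) := by
      intro b h1 h2
      simp only [hW']
      rw [dif_neg (by omega), dif_neg (by omega)]
    have key : ∀ b, 1 ≤ b → b ≤ H' + 1 → segProd d W' 0 b = Jmat (d b) m * D := by
      intro b
      induction b with
      | zero => omega
      | succ b ih =>
        intro _ hb
        rw [segProd_succ]
        cases b with
        | zero => rw [segProd_zero, Matrix.mul_one, hW0]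
        | succ b' =>
          rw [ih (by omega) (by omega), hWmid (b' + 1) (by omega) (by omega),
            Matrix.mul_assoc, ← Matrix.mul_assoc (Jmat m (d (b' + 1))),
            Jmul (by simpa [hm] using hwidth (b' + 1) (by omega) (by omega)),
            Jmat_self, Matrix.one_mul]
    refine ⟨W', ?_⟩
    rw [segProd_succ, hWH, key (H' + 1) (by omega) le_rfl, Matrix.mul_assoc,
      ← Matrix.mul_assoc (Jmat m (d (H' + 1))),
      Jmul (by simpa [hm] using hwidth (H' + 1) (by omega) le_rfl),
      Jmat_self, Matrix.one_mul, hCD]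

/-- Theorem 3, Part 2(b): at a point where `∇ℓ₀` vanishes, the tuple is a global
min (max) of `ℓ = ℓ₀ ∘ product` iff the product is a global min (max) of `ℓ₀`. -/
theorem stmt17 (H : ℕ) (d : ℕ → ℕ)
    (hwidth : ∀ j, 1 ≤ j → j ≤ H → min (d 0) (d (H + 1)) ≤ d j)
    (ℓ₀ : Matrix (Fin (d (H + 1))) (Fin (d 0)) ℝ → ℝ)
    (hdiff : Differentiable ℝ ℓ₀)
    (What : ∀ j : ℕ, Matrix (Fin (d (j + 1))) (Fin (d j)) ℝ)
    (hgrad : fderiv ℝ ℓ₀ (segProd d What 0 (H + 1)) = 0) :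
    ((∀ W' : ∀ j : ℕ, Matrix (Fin (d (j + 1))) (Fin (d j)) ℝ,
        ℓ₀ (segProd d What 0 (H + 1)) ≤ ℓ₀ (segProd d W' 0 (H + 1))) ↔
      ∀ R, ℓ₀ (segProd d What 0 (H + 1)) ≤ ℓ₀ R) ∧
    ((∀ W' : ∀ j : ℕ, Matrix (Fin (d (j + 1))) (Fin (d j)) ℝ,
        ℓ₀ (segProd d W' 0 (H + 1)) ≤ ℓ₀ (segProd d What 0 (H + 1))) ↔
      ∀ R, ℓ₀ R ≤ ℓ₀ (segProd d What 0 (H + 1))) := by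
  constructor
  · constructor
    · intro h R
      obtain ⟨W', hW'⟩ := segProd_surj H d hwidth R
      rw [← hW']; exact h W'
    · intro h W'; exact h _
  · constructor
    · intro h R
      obtain ⟨W', hW'⟩ := segProd_surj H d hwidth R
      rw [← hW']; exact h W'
    · intro h W'; exact h _
end
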